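/- arXiv:1109.2669 — 9 statements merged into one kernel-verified Lean document; each statement's English description precedes it below -/
import Mathlib

section
/- Let ξ be a complex-valued random variable with finite moments up to order 4 satisfying E(ξ) = E(|ξ|²). Then E(|ξ|²)·E(|1−ξ|²)·E(|ξ|²|1−ξ|²) ≥ |E(ξ|1−ξ|²)|². -/
open Finset ComplexConjugate

/-!
Put `a = E|ξ|² = E ξ`, which is real. The variable `X = ξ - |ξ|² = ξ (1 - ξ̄)` is centred, and
`ξ |1 - ξ|² = X (1 - ξ)`, so `E(ξ |1 - ξ|²) = E(X (c - ξ))` for every constant `c`. Take `c = a`: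
Cauchy–Schwarz bounds the square by `E|X|² · E|a - ξ|²`, where `E|X|² = E(|ξ|² |1 - ξ|²)` and
`E|a - ξ|² = a - a² = E|ξ|² · E|1 - ξ|²`.
-/

namespace Complex

variable {ι : Type*} (s : Finset ι) (w : ι → ℝ)

theorem norm_sum_weight_mul_sq_le (hw : ∀ i ∈ s, 0 ≤ w i) (f g : ι → ℂ) :
    ‖∑ i ∈ s, (w i : ℂ) * (f i * g i)‖ ^ 2 ≤
      (∑ i ∈ s, w i * ‖f i‖ ^ 2) * ∑ i ∈ s, w i * ‖g i‖ ^ 2 := by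
  have hnorm : ‖∑ i ∈ s, (w i : ℂ) * (f i * g i)‖ ≤ ∑ i ∈ s, w i * ‖f i‖ * ‖g i‖ := by
    refine (norm_sum_le _ _).trans_eq (sum_congr rfl fun i hi => ?_)
    rw [norm_mul, norm_mul, Complex.norm_of_nonneg (hw i hi), mul_assoc]
  calc ‖∑ i ∈ s, (w i : ℂ) * (f i * g i)‖ ^ 2
      ≤ (∑ i ∈ s, w i * ‖f i‖ * ‖g i‖) ^ 2 := by gcongr
    _ ≤ _ := sum_sq_le_sum_mul_sum_of_sq_le_mul s
          (fun i hi => mul_nonneg (hw i hi) (sq_nonneg _))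
          (fun i hi => mul_nonneg (hw i hi) (sq_nonneg _))
          (fun i _ => le_of_eq (by ring))

theorem sum_weight_mul_norm_ofReal_sub_sq (c : ℝ) (z : ι → ℂ) :
    ∑ i ∈ s, w i * ‖(c : ℂ) - z i‖ ^ 2 =
      c ^ 2 * ∑ i ∈ s, w i - 2 * c * ∑ i ∈ s, w i * (z i).re + ∑ i ∈ s, w i * ‖z i‖ ^ 2 := by
  simp only [mul_sum, ← sum_sub_distrib, ← sum_add_distrib]
  refine sum_congr rfl fun i _ => ?_
  simp only [Complex.sq_norm, normSq_sub, normSq_ofReal, mul_re, conj_re, conj_im, ofReal_re,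
    ofReal_im]
  ring

theorem mul_one_sub_conj (z : ℂ) : z * (1 - conj z) = z - ((‖z‖ : ℝ) : ℂ) ^ 2 := by
  rw [mul_sub, mul_one, mul_conj, normSq_eq_norm_sq, ofReal_pow]

theorem mul_ofReal_norm_one_sub_sq (z : ℂ) :
    z * ((‖1 - z‖ : ℝ) : ℂ) ^ 2 = (z - ((‖z‖ : ℝ) : ℂ) ^ 2) * (1 - z) := by
  rw [← mul_one_sub_conj, ← ofReal_pow, ← normSq_eq_norm_sq, ← mul_conj, map_sub, map_one]
  ring

theorem norm_sub_ofReal_norm_sq (z : ℂ) : ‖z - ((‖z‖ : ℝ) : ℂ) ^ 2‖ = ‖z‖ * ‖1 - z‖ := by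
  rw [← mul_one_sub_conj, norm_mul, ← norm_conj (1 - z), map_sub, map_one]

theorem sum_weight_mul_ofReal_norm_one_sub_sq_eq {z : ι → ℂ}
    (hmom : ∑ i ∈ s, (w i : ℂ) * z i = ∑ i ∈ s, (w i : ℂ) * ((‖z i‖ : ℝ) : ℂ) ^ 2) (c : ℂ) :
    ∑ i ∈ s, (w i : ℂ) * z i * ((‖1 - z i‖ : ℝ) : ℂ) ^ 2 =
      ∑ i ∈ s, (w i : ℂ) * ((z i - ((‖z i‖ : ℝ) : ℂ) ^ 2) * (c - z i)) := by
  have hcentred : ∑ i ∈ s, (w i : ℂ) * (z i - ((‖z i‖ : ℝ) : ℂ) ^ 2) = 0 := by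
    rw [← sub_eq_zero_of_eq hmom, ← sum_sub_distrib]
    simp only [mul_sub]
  have hsplit : ∀ i, (w i : ℂ) * z i * ((‖1 - z i‖ : ℝ) : ℂ) ^ 2 =
      (w i : ℂ) * ((z i - ((‖z i‖ : ℝ) : ℂ) ^ 2) * (c - z i)) +
        (1 - c) * ((w i : ℂ) * (z i - ((‖z i‖ : ℝ) : ℂ) ^ 2)) := by
    intro i
    rw [mul_assoc, mul_ofReal_norm_one_sub_sq]
    ring
  rw [sum_congr rfl fun i _ => hsplit i, sum_add_distrib, ← mul_sum, hcentred, mul_zero, add_zero]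

end Complex

open Complex

/-- Lemma 4.3 (Pearson-type inequality): for a finitely-supported complex random
variable ξ (weights `w` nonneg summing to 1) with E(ξ) = E(|ξ|²), one has
E(|ξ|²)·E(|1−ξ|²)·E(|ξ|²|1−ξ|²) ≥ |E(ξ|1−ξ|²)|². -/
theorem stmt0 (m : ℕ) (w : Fin m → ℝ) (ξ : Fin m → ℂ)
    (hw : ∀ i, 0 ≤ w i) (hsum : ∑ i, w i = 1)
    (hmom : ∑ i, (w i : ℂ) * ξ i = ∑ i, (w i : ℂ) * ((‖ξ i‖ : ℝ) : ℂ) ^ 2) :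
    ‖∑ i, (w i : ℂ) * ξ i * ((‖1 - ξ i‖ : ℝ) : ℂ) ^ 2‖ ^ 2 ≤
      (∑ i, w i * ‖ξ i‖ ^ 2) * (∑ i, w i * ‖1 - ξ i‖ ^ 2) *
        (∑ i, w i * ‖ξ i‖ ^ 2 * ‖1 - ξ i‖ ^ 2) := by
  generalize ha : ∑ i, w i * ‖ξ i‖ ^ 2 = a
  have hre : ∑ i, w i * (ξ i).re = a := by
    simpa [re_sum, ← ha, ← ofReal_pow] using congrArg re hmom
  have hvar : ∑ i, w i * ‖(a : ℂ) - ξ i‖ ^ 2 = a * (1 - a) := by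
    rw [sum_weight_mul_norm_ofReal_sub_sq, hsum, hre, ha]; ring
  have hone : ∑ i, w i * ‖1 - ξ i‖ ^ 2 = 1 - a := by
    have := sum_weight_mul_norm_ofReal_sub_sq univ w 1 ξ
    rw [ofReal_one, hsum, hre, ha] at this
    rw [this]; ring
  calc ‖∑ i, (w i : ℂ) * ξ i * ((‖1 - ξ i‖ : ℝ) : ℂ) ^ 2‖ ^ 2
      = ‖∑ i, (w i : ℂ) * ((ξ i - ((‖ξ i‖ : ℝ) : ℂ) ^ 2) * ((a : ℂ) - ξ i))‖ ^ 2 := by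
        rw [sum_weight_mul_ofReal_norm_one_sub_sq_eq _ _ hmom]
    _ ≤ (∑ i, w i * ‖ξ i - ((‖ξ i‖ : ℝ) : ℂ) ^ 2‖ ^ 2) * ∑ i, w i * ‖(a : ℂ) - ξ i‖ ^ 2 :=
        norm_sum_weight_mul_sq_le _ _ (fun i _ => hw i) _ _
    _ = _ := by
        simp only [norm_sub_ofReal_norm_sq, mul_pow, mul_assoc, hvar, hone]
        ring
end

section
/- For the Orthomin(1) iteration r_{n+1} = r_n − λ_n A r_n applied to a diagonal matrix A = diag[μ₁,…,μ_d] with nonzero entries and λ_n = ⟨r_n, A r_n⟩/⟨A r_n, A r_n⟩, the residual ratio satisfies ‖r_{n+1}‖²/‖r_n‖² = 1 − |E_n(μ)|²/E_n(|μ|²), where E_n denotes expectation with respect to the probability measure with weights proportional to |r_n^k|². -/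
/-!
The Orthomin(1) step `r' = r - λ A r` subtracts from `r` its orthogonal projection onto the line
spanned by `A r`, so by Pythagoras `‖r'‖² = ‖r‖² - |⟪A r, r⟫|² / ‖A r‖²`. For diagonal `A` one has
`⟪r, A r⟫ = ∑ μₖ |rₖ|²` and `‖A r‖² = ∑ |μₖ|² |rₖ|²`; dividing by `‖r‖²` turns both into
expectations for the weights `|rₖ|² / ‖r‖²`.
-/

theorem norm_sub_inner_div_inner_smul_sq {𝕜 E : Type*} [RCLike 𝕜] [NormedAddCommGroup E]
    [InnerProductSpace 𝕜 E] (v w : E) :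
    ‖w - (inner 𝕜 v w / inner 𝕜 v v) • v‖ ^ 2 = ‖w‖ ^ 2 - ‖inner 𝕜 v w‖ ^ 2 / ‖v‖ ^ 2 := by
  have pythagoras := (𝕜 ∙ v).norm_sq_eq_add_norm_sq_starProjection w
  rw [Submodule.starProjection_orthogonal_val, Submodule.starProjection_singleton] at pythagoras
  rw [inner_self_eq_norm_sq_to_K, ← RCLike.ofReal_pow, pythagoras, norm_smul, norm_div,
    RCLike.norm_ofReal, abs_of_nonneg (by positivity)]
  rcases eq_or_ne v 0 with rfl | hv
  · simp
  · have : ‖v‖ ≠ 0 := norm_ne_zero_iff.mpr hv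
    field_simp
    ring

theorem EuclideanSpace.inner_toLp_toLp_mul_eq_sum_mul_norm_sq {ι : Type*} [Fintype ι]
    (μ r : ι → ℂ) :
    inner ℂ (WithLp.toLp 2 r : EuclideanSpace ℂ ι) (WithLp.toLp 2 fun k => μ k * r k) =
      ∑ k, μ k * ((‖r k‖ : ℝ) : ℂ) ^ 2 := by
  rw [EuclideanSpace.inner_toLp_toLp]
  refine Finset.sum_congr rfl fun k _ => ?_
  rw [← Complex.mul_conj']
  simp only [Pi.star_apply, RCLike.star_def]
  ring

theorem sub_sq_div_div_eq_one_sub_div_sq_div {K : Type*} [Field K] {s : K} (hs : s ≠ 0)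
    (a t : K) :
    (s - a ^ 2 / t) / s = 1 - (a / s) ^ 2 / (t / s) := by
  rw [div_pow, div_div_eq_mul_div, sub_div, div_self hs]
  field_simp

theorem stmt2_general (d : ℕ) (μ : Fin d → ℂ)
    (r : Fin d → ℂ) (hr : r ≠ 0)
    (lam : ℂ)
    (hlam : lam = (∑ k, r k * (starRingEnd ℂ) (μ k * r k)) /
      (∑ k, (μ k * r k) * (starRingEnd ℂ) (μ k * r k)))
    (r' : Fin d → ℂ) (hr' : r' = fun k => r k - lam * (μ k * r k)) :
    (∑ k, ‖r' k‖ ^ 2) / (∑ k, ‖r k‖ ^ 2) =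
      1 - ‖(∑ k, μ k * ((‖r k‖ : ℝ) : ℂ) ^ 2) /
            ((∑ k, ‖r k‖ ^ 2 : ℝ) : ℂ)‖ ^ 2 /
        ((∑ k, ‖μ k‖ ^ 2 * ‖r k‖ ^ 2) /
          (∑ k, ‖r k‖ ^ 2)) := by
  set R : EuclideanSpace ℂ (Fin d) := WithLp.toLp 2 r
  set V : EuclideanSpace ℂ (Fin d) := WithLp.toLp 2 fun k => μ k * r k
  have hlam' : lam = inner ℂ V R / inner ℂ V V := hlam
  have hr'R : ∑ k, ‖r' k‖ ^ 2 = ‖R - lam • V‖ ^ 2 := by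
    rw [EuclideanSpace.norm_sq_eq, hr']
    rfl
  have hR : ∑ k, ‖r k‖ ^ 2 = ‖R‖ ^ 2 := (EuclideanSpace.norm_sq_eq R).symm
  have hV : ∑ k, ‖μ k‖ ^ 2 * ‖r k‖ ^ 2 = ‖V‖ ^ 2 := by
    simp [V, EuclideanSpace.norm_sq_eq, mul_pow]
  have hR0 : ‖R‖ ^ 2 ≠ 0 := by
    simpa [R] using hr
  rw [hr'R, hlam', norm_sub_inner_div_inner_smul_sq, hR, hV,
    ← EuclideanSpace.inner_toLp_toLp_mul_eq_sum_mul_norm_sq,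
    norm_inner_symm, norm_div, Complex.norm_real, Real.norm_of_nonneg (by positivity)]
  exact sub_sq_div_div_eq_one_sub_div_sq_div hR0 _ _

/-- One step of Orthomin(1) for A = diag[μ₁,…,μ_d]:
‖r_{n+1}‖²/‖r_n‖² = 1 − |E_n(μ)|²/E_n(|μ|²), where E_n is expectation with
respect to weights proportional to |r_n^k|². -/
theorem stmt2 (d : ℕ) (μ : Fin d → ℂ) (hμ : ∀ k, μ k ≠ 0)
    (r : Fin d → ℂ) (hr : r ≠ 0)
    (lam : ℂ)
    (hlam : lam = (∑ k, r k * (starRingEnd ℂ) (μ k * r k)) /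
      (∑ k, (μ k * r k) * (starRingEnd ℂ) (μ k * r k)))
    (r' : Fin d → ℂ) (hr' : r' = fun k => r k - lam * (μ k * r k)) :
    (∑ k, ‖r' k‖ ^ 2) / (∑ k, ‖r k‖ ^ 2) =
      1 - ‖(∑ k, μ k * ((‖r k‖ : ℝ) : ℂ) ^ 2) /
            ((∑ k, ‖r k‖ ^ 2 : ℝ) : ℂ)‖ ^ 2 /
        ((∑ k, ‖μ k‖ ^ 2 * ‖r k‖ ^ 2) /
          (∑ k, ‖r k‖ ^ 2)) :=
  stmt2_general d μ r hr lam hlam r' hr'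
end

section
/- Let A ∈ M_d(ℂ) be a normal matrix whose spectrum is contained in the closed disk of radius ρ about z₀, with 0 < ρ < |z₀|. Then the Orthomin(k) residuals satisfy ‖r_{n+1}‖ ≤ (ρ/|z₀|)·‖r_n‖. -/
/-!
The residual `r - Π_V r` is the point of `r + V` closest to the origin, so it is no longer than
`r - z₀⁻¹ • A r = -z₀⁻¹ • (A - z₀) r`, whose norm is at most `‖A - z₀‖ ‖r‖ / |z₀|`. As `A - z₀`
is normal, its operator norm equals its spectral radius, which is at most `ρ`.
-/

section CStarAlgebra

variable {A : Type*} [CStarAlgebra A]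

lemma IsStarNormal.sub_algebraMap {a : A} [IsStarNormal a] (z : ℂ) :
    IsStarNormal (a - algebraMap ℂ A z) := by
  have : IsStarNormal (algebraMap ℂ A z) :=
    ⟨by rw [← algebraMap_star_comm]; exact Algebra.commute_algebraMap_left _ _⟩
  refine Commute.isStarNormal_sub ?_
  rw [← algebraMap_star_comm]
  exact Algebra.commute_algebraMap_right _ _

lemma IsStarNormal.norm_le_of_forall_mem_spectrum {a : A} [IsStarNormal a] {r : ℝ}
    (hr : 0 ≤ r) (h : ∀ z ∈ spectrum ℂ a, ‖z‖ ≤ r) : ‖a‖ ≤ r := by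
  have : spectralRadius ℂ a ≤ ENNReal.ofReal r := iSup₂_le fun z hz => by
    rw [← ENNReal.ofReal_coe_nnreal, coe_nnnorm]
    exact ENNReal.ofReal_le_ofReal (h z hz)
  rwa [IsStarNormal.spectralRadius_eq_nnnorm, ← ENNReal.ofReal_coe_nnreal, coe_nnnorm,
    ENNReal.ofReal_le_ofReal_iff hr] at this

lemma IsStarNormal.norm_sub_algebraMap_le {a : A} [IsStarNormal a] {z₀ : ℂ} {r : ℝ}
    (hr : 0 ≤ r) (h : ∀ z ∈ spectrum ℂ a, ‖z - z₀‖ ≤ r) :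
    ‖a - algebraMap ℂ A z₀‖ ≤ r := by
  have := IsStarNormal.sub_algebraMap (a := a) z₀
  refine IsStarNormal.norm_le_of_forall_mem_spectrum hr fun z hz => ?_
  rw [← spectrum.sub_singleton_eq, Set.sub_singleton] at hz
  obtain ⟨w, hw, rfl⟩ := hz
  exact h w hw

end CStarAlgebra

namespace Submodule

variable {𝕜 E : Type*} [RCLike 𝕜] [NormedAddCommGroup E] [InnerProductSpace 𝕜 E]
  (K : Submodule 𝕜 E) [K.HasOrthogonalProjection]

lemma norm_sub_starProjection_le {v : E} (hv : v ∈ K) (x : E) :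
    ‖x - K.starProjection x‖ ≤ ‖x - v‖ := by
  rw [starProjection_minimal]
  exact ciInf_le ⟨0, Set.forall_mem_range.mpr fun _ => norm_nonneg _⟩ (⟨v, hv⟩ : K)

lemma norm_sub_starProjection_le_div {x y : E} {c : 𝕜} (hc : c ≠ 0) (hy : y ∈ K) :
    ‖x - K.starProjection x‖ ≤ ‖y - c • x‖ / ‖c‖ := by
  have hxy : x - c⁻¹ • y = -c⁻¹ • (y - c • x) := by
    rw [smul_sub, smul_smul, neg_mul, inv_mul_cancel₀ hc, neg_smul, neg_smul, one_smul]
    abel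
  calc ‖x - K.starProjection x‖ ≤ ‖x - c⁻¹ • y‖ :=
        K.norm_sub_starProjection_le (K.smul_mem _ hy) x
    _ = ‖y - c • x‖ / ‖c‖ := by rw [hxy, norm_smul, norm_neg, norm_inv, inv_mul_eq_div]

end Submodule

/-- Theorem 2.1: if A is normal with spectrum in the closed disk of radius ρ
about z₀ (0 < ρ < |z₀|), and r_{n+1} = r_n − Π_V r_n where V is a subspace
containing A r_n (as happens in the Orthomin(k) iteration), then
‖r_{n+1}‖ ≤ (ρ/|z₀|)‖r_n‖. -/
theorem stmt4 (d : ℕ) (A : Matrix (Fin d) (Fin d) ℂ) (hA : IsStarNormal A)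
    (z₀ : ℂ) (ρ : ℝ) (hρ : 0 < ρ) (hz : ρ < ‖z₀‖)
    (hspec : ∀ z ∈ spectrum ℂ A, ‖z - z₀‖ ≤ ρ)
    (V : Submodule ℂ (EuclideanSpace ℂ (Fin d))) [CompleteSpace V]
    (rn : EuclideanSpace ℂ (Fin d))
    (hmem : (WithLp.equiv 2 (Fin d → ℂ)).symm
        (A.mulVec ((WithLp.equiv 2 (Fin d → ℂ)) rn)) ∈ V)
    (rn1 : EuclideanSpace ℂ (Fin d))
    (hrn1 : rn1 = rn - (V.orthogonalProjectionOnto rn : EuclideanSpace ℂ (Fin d))) :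
    ‖rn1‖ ≤ (ρ / ‖z₀‖) * ‖rn‖ := by
  set T := Matrix.toEuclideanCLM (𝕜 := ℂ) (n := Fin d) A
  have hTnormal : IsStarNormal T := hA.map _
  have hT : ‖T - algebraMap ℂ _ z₀‖ ≤ ρ := by
    refine hTnormal.norm_sub_algebraMap_le hρ.le fun z hz => hspec z ?_
    rwa [AlgEquiv.spectrum_eq] at hz
  have hz₀ : z₀ ≠ 0 := norm_pos_iff.mp (hρ.trans hz)
  calc ‖rn1‖ ≤ ‖T rn - z₀ • rn‖ / ‖z₀‖ := by
        rw [hrn1, ← Submodule.starProjection_apply]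
        exact V.norm_sub_starProjection_le_div hz₀ hmem
    _ ≤ ρ * ‖rn‖ / ‖z₀‖ := by
        have hB : (T - algebraMap ℂ _ z₀) rn = T rn - z₀ • rn := by
          rw [sub_apply, ContinuousLinearMap.algebraMap_apply]
        grw [← hB, ContinuousLinearMap.le_opNorm, hT]
    _ = ρ / ‖z₀‖ * ‖rn‖ := (div_mul_eq_mul_div _ _ _).symm
end

section
/- Let A = I + ρU with U = diag[ζ₁,…,ζ_d], |ζ_k| = 1, 0 < ρ < 1, and consider the Orthomin(1) quantities ω_n = ⟨U r_n, r_n⟩/⟨r_n, r_n⟩ and λ_n = ⟨r_n, A r_n⟩/‖A r_n‖². Then λ_n = (1 + ρ·conj(ω_n))/(1 + ρ² + 2ρ·Re(ω_n)), T_n := (1 − λ_n)/(ρλ_n) = (ω_n + ρ)/(ρ·conj(ω_n) + 1), and q_n² = ρ²(1 − |ω_n|²)/(1 + ρ² + 2ρ·Re(ω_n)). -/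
open Finset
open scoped InnerProductSpace ComplexConjugate

/-!
Since `‖ζ k‖ = 1`, every quantity is a moment of the weights `‖r k‖²` against the points `ζ k`:
`⟨r, A r⟩ = ‖r‖² (1 + ρ ω̄)` and `‖A r‖² = ‖r‖² (1 + ρ² + 2ρ Re ω)`, which gives `λ`, and then `T`
by algebra. For `q`, the vector `λ A r` is the orthogonal projection of `r` onto the line through
`A r`, so by Pythagoras `‖r'‖² = ‖r‖² - |⟨r, A r⟩|² / ‖A r‖²`, that is
`q² = 1 - |1 + ρ ω|² / (1 + ρ² + 2ρ Re ω) = ρ² (1 - |ω|²) / (1 + ρ² + 2ρ Re ω)`.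
-/

theorem norm_sub_inner_div_smul_sq {𝕜 E : Type*} [RCLike 𝕜] [NormedAddCommGroup E]
    [InnerProductSpace 𝕜 E] (v r : E) :
    ‖r - (⟪v, r⟫_𝕜 / ((‖v‖ ^ 2 : ℝ) : 𝕜)) • v‖ ^ 2 = ‖r‖ ^ 2 - ‖⟪v, r⟫_𝕜‖ ^ 2 / ‖v‖ ^ 2 := by
  have hperp : (𝕜 ∙ v)ᗮ.starProjection r = r - (𝕜 ∙ v).starProjection r :=
    eq_sub_of_add_eq' (Submodule.starProjection_add_starProjection_orthogonal r)
  rw [← Submodule.starProjection_singleton, ← hperp,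
    Submodule.norm_sq_eq_add_norm_sq_starProjection r (𝕜 ∙ v), Submodule.starProjection_singleton,
    norm_smul, norm_div, RCLike.norm_ofReal, abs_of_nonneg (by positivity)]
  rcases eq_or_ne v 0 with rfl | hv
  · simp
  · have : ‖v‖ ≠ 0 := norm_ne_zero_iff.mpr hv
    field_simp
    ring

theorem sum_norm_sub_mul_sq {𝕜 ι : Type*} [RCLike 𝕜] [Fintype ι] (v r : ι → 𝕜) :
    ∑ k, ‖r k - (∑ j, r j * conj (v j)) / ((∑ j, ‖v j‖ ^ 2 : ℝ) : 𝕜) * v k‖ ^ 2 =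
      ∑ k, ‖r k‖ ^ 2 - ‖∑ k, r k * conj (v k)‖ ^ 2 / ∑ k, ‖v k‖ ^ 2 := by
  simpa only [EuclideanSpace.norm_sq_eq, PiLp.inner_apply, RCLike.inner_apply, PiLp.sub_apply,
    PiLp.smul_apply, smul_eq_mul] using
    norm_sub_inner_div_smul_sq (𝕜 := 𝕜) (WithLp.toLp 2 v : EuclideanSpace 𝕜 ι) (WithLp.toLp 2 r)

theorem Complex.norm_one_add_ofReal_mul_sq (ρ : ℝ) (z : ℂ) :
    ‖1 + ρ * z‖ ^ 2 = 1 + 2 * ρ * z.re + ρ ^ 2 * ‖z‖ ^ 2 := by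
  simp only [Complex.sq_norm, Complex.normSq_apply, Complex.add_re, Complex.add_im,
    Complex.re_ofReal_mul, Complex.im_ofReal_mul, Complex.one_re, Complex.one_im]
  ring

theorem Complex.mul_mul_conj (ζ z : ℂ) : ζ * z * conj z = ‖z‖ ^ 2 * ζ := by
  rw [mul_assoc, Complex.mul_conj', mul_comm]

section UnitDisc

variable {ρ : ℝ} {ω : ℂ}

theorem one_add_sq_add_two_mul_re_pos (hρ₀ : 0 ≤ ρ) (hρ₁ : ρ < 1) (hω : ‖ω‖ ≤ 1) :
    0 < 1 + ρ ^ 2 + 2 * ρ * ω.re := by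
  have := neg_le_of_abs_le ((Complex.abs_re_le_norm ω).trans hω)
  nlinarith

theorem one_sub_div_mul_eq_of_eq_div {lam : ℂ} (hρ₀ : 0 < ρ) (hρ₁ : ρ < 1) (hω : ‖ω‖ ≤ 1)
    (hlam : lam = (1 + ρ * conj ω) / ((1 + ρ ^ 2 + 2 * ρ * ω.re : ℝ) : ℂ)) :
    (1 - lam) / (ρ * lam) = (ω + ρ) / (ρ * conj ω + 1) := by
  have hD : ((1 + ρ ^ 2 + 2 * ρ * ω.re : ℝ) : ℂ) ≠ 0 :=
    Complex.ofReal_ne_zero.mpr (one_add_sq_add_two_mul_re_pos hρ₀.le hρ₁ hω).ne'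
  have hsub : 1 - lam = ρ * (ω + ρ) / ((1 + ρ ^ 2 + 2 * ρ * ω.re : ℝ) : ℂ) := by
    have hDC : ((1 + ρ ^ 2 + 2 * ρ * ω.re : ℝ) : ℂ) = 1 + ρ ^ 2 + ρ * (ω + conj ω) := by
      rw [Complex.add_conj]; push_cast; ring
    rw [hlam, eq_div_iff hD, sub_mul, div_mul_cancel₀ _ hD, hDC]
    ring
  rw [hsub, hlam, mul_div_assoc', div_div_div_cancel_right₀ hD,
    mul_div_mul_left _ _ (Complex.ofReal_ne_zero.mpr hρ₀.ne'), add_comm 1]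

end UnitDisc

section RayleighQuotient

variable {ι : Type*} [Fintype ι] (ζ r : ι → ℂ)

theorem norm_sum_mul_mul_conj_le (hζ : ∀ k, ‖ζ k‖ ≤ 1) :
    ‖∑ k, ζ k * r k * conj (r k)‖ ≤ ∑ k, ‖r k‖ ^ 2 :=
  (norm_sum_le _ _).trans <| sum_le_sum fun k _ => by
    rw [Complex.mul_mul_conj, norm_mul, ← Complex.ofReal_pow, Complex.norm_real,
      Real.norm_of_nonneg (by positivity)]
    exact mul_le_of_le_one_right (by positivity) (hζ k)

theorem norm_sum_mul_mul_conj_div_le_one (hζ : ∀ k, ‖ζ k‖ ≤ 1) :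
    ‖(∑ k, ζ k * r k * conj (r k)) / ((∑ k, ‖r k‖ ^ 2 : ℝ) : ℂ)‖ ≤ 1 := by
  rw [norm_div, Complex.norm_real, Real.norm_of_nonneg (by positivity)]
  exact div_le_one_of_le₀ (norm_sum_mul_mul_conj_le ζ r hζ) (by positivity)

theorem sum_mul_conj_one_add_mul_mul (ρ : ℝ) :
    ∑ k, r k * conj ((1 + ρ * ζ k) * r k) =
      ((∑ k, ‖r k‖ ^ 2 : ℝ) : ℂ) + ρ * conj (∑ k, ζ k * r k * conj (r k)) := by
  simp only [map_sum, Complex.ofReal_sum, mul_sum, ← sum_add_distrib]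
  refine sum_congr rfl fun k _ => ?_
  simp only [map_mul, map_add, map_one, Complex.conj_conj, Complex.conj_ofReal,
    Complex.sq_norm, Complex.normSq_eq_conj_mul_self]
  ring

theorem sum_norm_one_add_mul_mul_sq (hζ : ∀ k, ‖ζ k‖ = 1) (ρ : ℝ) :
    ∑ k, ‖(1 + ρ * ζ k) * r k‖ ^ 2 =
      (1 + ρ ^ 2) * ∑ k, ‖r k‖ ^ 2 + 2 * ρ * (∑ k, ζ k * r k * conj (r k)).re := by
  simp only [Complex.re_sum, Complex.mul_mul_conj, ← Complex.ofReal_pow,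
    Complex.re_ofReal_mul, mul_sum, ← sum_add_distrib]
  refine sum_congr rfl fun k _ => ?_
  rw [norm_mul, mul_pow, Complex.norm_one_add_ofReal_mul_sq, hζ]
  ring

end RayleighQuotient

/-- Lemma 4.1: with A = I + ρU, U = diag[ζ₁,…,ζ_d], |ζ_k| = 1, 0 < ρ < 1,
ω = ⟨Ur,r⟩/⟨r,r⟩, λ = ⟨r,Ar⟩/‖Ar‖², T = (1−λ)/(ρλ):
λ = (1+ρω̄)/(1+ρ²+2ρ Re ω), T = (ω+ρ)/(ρω̄+1),
q² = ρ²(1−|ω|²)/(1+ρ²+2ρ Re ω). -/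
theorem stmt6 (d : ℕ) (ρ : ℝ) (h1 : 0 < ρ) (h2 : ρ < 1)
    (ζ : Fin d → ℂ) (hζ : ∀ k, ‖ζ k‖ = 1)
    (r : Fin d → ℂ) (hr : r ≠ 0)
    (ω lam T : ℂ)
    (hω : ω = (∑ k, ζ k * r k * (starRingEnd ℂ) (r k)) /
      ((∑ k, ‖r k‖ ^ 2 : ℝ) : ℂ))
    (hlam : lam = (∑ k, r k * (starRingEnd ℂ) ((1 + ρ * ζ k) * r k)) /
      ((∑ k, ‖(1 + ρ * ζ k) * r k‖ ^ 2 : ℝ) : ℂ))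
    (hT : T = (1 - lam) / (ρ * lam))
    (r' : Fin d → ℂ) (hr' : r' = fun k => r k - lam * ((1 + ρ * ζ k) * r k)) :
    lam = (1 + ρ * (starRingEnd ℂ) ω) / ((1 + ρ ^ 2 + 2 * ρ * ω.re : ℝ) : ℂ) ∧
    T = (ω + ρ) / (ρ * (starRingEnd ℂ) ω + 1) ∧
    (∑ k, ‖r' k‖ ^ 2) / (∑ k, ‖r k‖ ^ 2) =
      ρ ^ 2 * (1 - ‖ω‖ ^ 2) / (1 + ρ ^ 2 + 2 * ρ * ω.re) := by
  set S : ℝ := ∑ k, ‖r k‖ ^ 2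
  have hS : 0 < S := by
    obtain ⟨k, hk⟩ := Function.ne_iff.mp hr
    exact sum_pos' (fun _ _ => by positivity) ⟨k, mem_univ k, pow_pos (norm_pos_iff.mpr hk) 2⟩
  have hω₁ : ‖ω‖ ≤ 1 := hω ▸ norm_sum_mul_mul_conj_div_le_one ζ r fun k => (hζ k).le
  have hW : ∑ k, ζ k * r k * conj (r k) = S * ω := by
    rw [hω, mul_div_cancel₀ _ (Complex.ofReal_ne_zero.mpr hS.ne')]
  set D : ℝ := 1 + ρ ^ 2 + 2 * ρ * ω.re
  have hN : ∑ k, r k * conj ((1 + ρ * ζ k) * r k) = S * (1 + ρ * conj ω) := by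
    rw [sum_mul_conj_one_add_mul_mul, hW, map_mul, Complex.conj_ofReal]; ring
  have hM : ∑ k, ‖(1 + ρ * ζ k) * r k‖ ^ 2 = S * D := by
    rw [sum_norm_one_add_mul_mul_sq ζ r hζ, hW, Complex.re_ofReal_mul]; ring
  have hlam' : lam = (1 + ρ * conj ω) / (D : ℂ) := by
    rw [hlam, hN, hM, Complex.ofReal_mul,
      mul_div_mul_left _ _ (Complex.ofReal_ne_zero.mpr hS.ne')]
  refine ⟨hlam', hT ▸ one_sub_div_mul_eq_of_eq_div h1 h2 hω₁ hlam', ?_⟩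
  have hq := sum_norm_sub_mul_sq (fun k => (1 + (ρ : ℂ) * ζ k) * r k) r
  -- the generic lemma casts `ℝ → ℂ` through `RCLike.ofReal`, which `hlam` does not
  simp only [RCLike.ofReal_eq_complex_ofReal] at hq
  rw [← hlam] at hq
  simp only [hr', hq, hN, hM]
  change (S - _) / S = _
  have hD : 0 < D := one_add_sq_add_two_mul_re_pos h1.le h2 hω₁
  rw [norm_mul, mul_pow, Complex.norm_real, Real.norm_of_nonneg hS.le,
    Complex.norm_one_add_ofReal_mul_sq, Complex.conj_re, Complex.norm_conj]
  field_simp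
  ring
end

section
/- With A = I + ρU, U unitary diagonal with unimodular entries, 0 < ρ < 1, and ω_n = ⟨U r_n, r_n⟩/⟨r_n, r_n⟩, one has |ω_n| ≤ 1 and the following are equivalent as n → ∞: (a) q_n → ρ; (b) ω_n → −ρ; (c) λ_n → 1; (d) T_n → 0. -/
/-!
Let `ω` be the Rayleigh quotient of `U` at the residual `r`. Both `⟨r, A r⟩` and `‖A r‖²` are
`‖r‖²` times explicit functions of `ω`, so one step of the iteration gives, with
`D = 1 + ρ² + 2ρ Re ω`, the closed forms `λ = (1 + ρ ω̄) / D`, `T = (ω + ρ) / (1 + ρ ω̄)` and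
`q² = ρ² (1 - |ω|²) / D = ρ² - ρ² |ω + ρ|² / D`. Since `|ω| ≤ 1`, both `D` and `|1 + ρ ω̄|` stay
between positive constants, so `|λ - 1|`, `|T|` and `ρ - q` are bounded above and below by constant
multiples of `|ω + ρ|`, `|ω + ρ|` and `|ω + ρ|²`, and each of (a), (c), (d) is equivalent to (b).
-/

open Finset Filter Topology Asymptotics ComplexConjugate

section Asymptotics

variable {α E F : Type*} [NormedAddCommGroup E] [NormedAddCommGroup F] {l : Filter α}

theorem tendsto_zero_iff_of_norm_le_mul {f : α → E} {g : α → F} {a b : ℝ}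
    (hf : ∀ x, ‖f x‖ ≤ a * ‖g x‖) (hg : ∀ x, ‖g x‖ ≤ b * ‖f x‖) :
    Tendsto f l (𝓝 0) ↔ Tendsto g l (𝓝 0) :=
  ⟨(isBigO_of_le' l hg).trans_tendsto, (isBigO_of_le' l hf).trans_tendsto⟩

theorem tendsto_norm_sq_zero_iff {f : α → E} :
    Tendsto (fun x => ‖f x‖ ^ 2) l (𝓝 0) ↔ Tendsto f l (𝓝 0) := by
  refine ⟨fun h => tendsto_zero_iff_norm_tendsto_zero.mpr (by simpa using h.sqrt), fun h => ?_⟩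
  simpa using (tendsto_zero_iff_norm_tendsto_zero.mp h).pow 2

theorem tendsto_add_nhds_zero_iff {f : α → E} {a : E} :
    Tendsto (fun x => f x + a) l (𝓝 0) ↔ Tendsto f l (𝓝 (-a)) := by
  simp [← tendsto_sub_nhds_zero_iff (x := -a)]

end Asymptotics

/-- `‖(1 + ρ U) r‖² / ‖r‖²` when `ω` is the Rayleigh quotient of the unitary `U` at `r`. -/
noncomputable def dilation (ρ : ℝ) (ω : ℂ) : ℝ := 1 + ρ ^ 2 + 2 * ρ * ω.re

noncomputable def stepSize (ρ : ℝ) (ω : ℂ) : ℂ := (1 + ρ * conj ω) / dilation ρ ω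

noncomputable def residualRatio (ρ : ℝ) (ω : ℂ) : ℝ := √(ρ ^ 2 * (1 - ‖ω‖ ^ 2) / dilation ρ ω)

section Scalar

variable {ρ : ℝ} {ω : ℂ}

theorem dilation_eq (ρ : ℝ) (ω : ℂ) : dilation ρ ω = ‖ω + ρ‖ ^ 2 + (1 - ‖ω‖ ^ 2) := by
  simp only [dilation, Complex.sq_norm, Complex.normSq_apply, Complex.add_re, Complex.add_im,
    Complex.ofReal_re, Complex.ofReal_im]
  ring

theorem sq_sub_le_dilation (h0 : 0 ≤ ρ) (hω : ‖ω‖ ≤ 1) : (1 - ρ) ^ 2 ≤ dilation ρ ω := by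
  have := (abs_le.mp ((Complex.abs_re_le_norm ω).trans hω)).1
  unfold dilation
  nlinarith

theorem dilation_le_sq_add (h0 : 0 ≤ ρ) (hω : ‖ω‖ ≤ 1) : dilation ρ ω ≤ (1 + ρ) ^ 2 := by
  have := (abs_le.mp ((Complex.abs_re_le_norm ω).trans hω)).2
  unfold dilation
  nlinarith

theorem dilation_pos (h0 : 0 ≤ ρ) (h1 : ρ < 1) (hω : ‖ω‖ ≤ 1) : 0 < dilation ρ ω :=
  lt_of_lt_of_le (by nlinarith) (sq_sub_le_dilation h0 hω)

theorem norm_mul_conj_le (h0 : 0 ≤ ρ) (hω : ‖ω‖ ≤ 1) : ‖(ρ : ℂ) * conj ω‖ ≤ ρ := by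
  rw [norm_mul, Complex.norm_conj, Complex.norm_of_nonneg h0]
  exact mul_le_of_le_one_right h0 hω

theorem one_sub_le_norm_one_add_mul_conj (h0 : 0 ≤ ρ) (hω : ‖ω‖ ≤ 1) :
    1 - ρ ≤ ‖1 + ρ * conj ω‖ := by
  have := norm_sub_le_norm_add (1 : ℂ) (ρ * conj ω)
  rw [norm_one] at this
  linarith [norm_mul_conj_le h0 hω]

theorem norm_one_add_mul_conj_le (h0 : 0 ≤ ρ) (hω : ‖ω‖ ≤ 1) :
    ‖1 + ρ * conj ω‖ ≤ 1 + ρ := by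
  have := norm_add_le (1 : ℂ) (ρ * conj ω)
  rw [norm_one] at this
  linarith [norm_mul_conj_le h0 hω]

theorem norm_stepSize_sub_one (h0 : 0 ≤ ρ) (hD : 0 < dilation ρ ω) :
    ‖stepSize ρ ω - 1‖ = ρ * ‖ω + ρ‖ / dilation ρ ω := by
  have hnum : 1 + ρ * conj ω - dilation ρ ω = -(ρ * (ω + ρ)) := by
    apply Complex.ext <;> simp [dilation, sq]
    ring
  rw [stepSize, div_sub_one (by exact_mod_cast hD.ne'), hnum, norm_div, norm_neg, norm_mul,
    Complex.norm_of_nonneg h0, Complex.norm_of_nonneg hD.le]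

theorem one_sub_stepSize_div (h0 : 0 < ρ) (h1 : ρ < 1) (hω : ‖ω‖ ≤ 1) :
    (1 - stepSize ρ ω) / (ρ * stepSize ρ ω) = (ω + ρ) / (1 + ρ * conj ω) := by
  have hD : (dilation ρ ω : ℂ) ≠ 0 := by exact_mod_cast (dilation_pos h0.le h1 hω).ne'
  have hA : 1 + ρ * conj ω ≠ 0 := by
    rw [← norm_pos_iff]; linarith [one_sub_le_norm_one_add_mul_conj h0.le hω]
  have hρ : (ρ : ℂ) ≠ 0 := by exact_mod_cast h0.ne'
  have hnum : dilation ρ ω - (1 + ρ * conj ω) = ρ * (ω + ρ) := by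
    apply Complex.ext <;> simp [dilation, sq]
    ring
  rw [stepSize, one_sub_div hD, hnum]
  field_simp

theorem residualRatio_nonneg : 0 ≤ residualRatio ρ ω := Real.sqrt_nonneg _

theorem residualRatio_sq (h0 : 0 ≤ ρ) (h1 : ρ < 1) (hω : ‖ω‖ ≤ 1) :
    residualRatio ρ ω ^ 2 = ρ ^ 2 * (1 - ‖ω‖ ^ 2) / dilation ρ ω := by
  have : 0 ≤ 1 - ‖ω‖ ^ 2 := by nlinarith [norm_nonneg ω]
  exact Real.sq_sqrt (by have := dilation_pos h0 h1 hω; positivity)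

theorem sq_sub_residualRatio_sq (h0 : 0 ≤ ρ) (h1 : ρ < 1) (hω : ‖ω‖ ≤ 1) :
    ρ ^ 2 - residualRatio ρ ω ^ 2 = ρ ^ 2 * ‖ω + ρ‖ ^ 2 / dilation ρ ω := by
  have hD := (dilation_pos h0 h1 hω).ne'
  rw [residualRatio_sq h0 h1 hω, eq_div_iff hD, sub_mul, div_mul_cancel₀ _ hD, dilation_eq]
  ring

theorem residualRatio_le (h0 : 0 ≤ ρ) (h1 : ρ < 1) (hω : ‖ω‖ ≤ 1) : residualRatio ρ ω ≤ ρ := by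
  have hsq : 0 ≤ ρ ^ 2 - residualRatio ρ ω ^ 2 := by
    rw [sq_sub_residualRatio_sq h0 h1 hω]
    have := dilation_pos h0 h1 hω
    positivity
  nlinarith [residualRatio_nonneg (ρ := ρ) (ω := ω)]

theorem sub_residualRatio_le (h0 : 0 < ρ) (h1 : ρ < 1) (hω : ‖ω‖ ≤ 1) :
    ρ - residualRatio ρ ω ≤ ρ / (1 - ρ) ^ 2 * ‖ω + ρ‖ ^ 2 := by
  have key : ρ * (ρ - residualRatio ρ ω) ≤ ρ * (ρ / (1 - ρ) ^ 2 * ‖ω + ρ‖ ^ 2) :=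
    calc ρ * (ρ - residualRatio ρ ω)
        ≤ ρ ^ 2 - residualRatio ρ ω ^ 2 := by
          nlinarith [residualRatio_le h0.le h1 hω, residualRatio_nonneg (ρ := ρ) (ω := ω)]
      _ = ρ ^ 2 * ‖ω + ρ‖ ^ 2 / dilation ρ ω := sq_sub_residualRatio_sq h0.le h1 hω
      _ ≤ ρ ^ 2 * ‖ω + ρ‖ ^ 2 / (1 - ρ) ^ 2 :=
        div_le_div_of_nonneg_left (by positivity) (by nlinarith) (sq_sub_le_dilation h0.le hω)
      _ = ρ * (ρ / (1 - ρ) ^ 2 * ‖ω + ρ‖ ^ 2) := by ring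
  exact le_of_mul_le_mul_left key h0

theorem le_sub_residualRatio (h0 : 0 < ρ) (h1 : ρ < 1) (hω : ‖ω‖ ≤ 1) :
    ρ / (2 * (1 + ρ) ^ 2) * ‖ω + ρ‖ ^ 2 ≤ ρ - residualRatio ρ ω := by
  have key : (2 * ρ) * (ρ / (2 * (1 + ρ) ^ 2) * ‖ω + ρ‖ ^ 2) ≤ (2 * ρ) * (ρ - residualRatio ρ ω) :=
    calc (2 * ρ) * (ρ / (2 * (1 + ρ) ^ 2) * ‖ω + ρ‖ ^ 2)
        = ρ ^ 2 * ‖ω + ρ‖ ^ 2 / (1 + ρ) ^ 2 := by field_simp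
      _ ≤ ρ ^ 2 * ‖ω + ρ‖ ^ 2 / dilation ρ ω :=
        div_le_div_of_nonneg_left (by positivity) (dilation_pos h0.le h1 hω)
          (dilation_le_sq_add h0.le hω)
      _ = ρ ^ 2 - residualRatio ρ ω ^ 2 := (sq_sub_residualRatio_sq h0.le h1 hω).symm
      _ ≤ (2 * ρ) * (ρ - residualRatio ρ ω) := by
          nlinarith [residualRatio_le h0.le h1 hω, residualRatio_nonneg (ρ := ρ) (ω := ω)]
  exact le_of_mul_le_mul_left key (by positivity)

theorem one_sub_two_re_stepSize_mul_add_norm_sq (hD : dilation ρ ω ≠ 0) :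
    1 - 2 * (stepSize ρ ω * (1 + ρ * ω)).re + ‖stepSize ρ ω‖ ^ 2 * dilation ρ ω
      = ρ ^ 2 * (1 - ‖ω‖ ^ 2) / dilation ρ ω := by
  simp only [stepSize, Complex.sq_norm, Complex.normSq_apply, Complex.div_re, Complex.div_im,
    Complex.mul_re, Complex.mul_im, Complex.add_re, Complex.add_im, Complex.one_re,
    Complex.one_im, Complex.ofReal_re, Complex.ofReal_im, Complex.conj_re, Complex.conj_im]
  field_simp
  simp only [dilation]
  ring

end Scalar

section Limits

variable {α : Type*} {l : Filter α} {ρ : ℝ} {ω : α → ℂ}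

theorem tendsto_stepSize_iff (h0 : 0 < ρ) (h1 : ρ < 1) (hω : ∀ x, ‖ω x‖ ≤ 1) :
    Tendsto (fun x => stepSize ρ (ω x)) l (𝓝 1) ↔ Tendsto ω l (𝓝 (-ρ)) := by
  rw [← tendsto_sub_nhds_zero_iff, ← tendsto_add_nhds_zero_iff]
  refine tendsto_zero_iff_of_norm_le_mul (a := ρ / (1 - ρ) ^ 2) (b := (1 + ρ) ^ 2 / ρ)
    (fun x => ?_) (fun x => ?_)
  all_goals
    have hD := dilation_pos h0.le h1 (hω x)
    rw [norm_stepSize_sub_one h0.le hD]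
  · calc ρ * ‖ω x + ρ‖ / dilation ρ (ω x)
        ≤ ρ * ‖ω x + ρ‖ / (1 - ρ) ^ 2 :=
          div_le_div_of_nonneg_left (by positivity) (by nlinarith) (sq_sub_le_dilation h0.le (hω x))
      _ = ρ / (1 - ρ) ^ 2 * ‖ω x + ρ‖ := by ring
  · rw [show (1 + ρ) ^ 2 / ρ * (ρ * ‖ω x + ρ‖ / dilation ρ (ω x))
        = (1 + ρ) ^ 2 / dilation ρ (ω x) * ‖ω x + ρ‖ by field_simp]
    refine le_mul_of_one_le_left (norm_nonneg _) ((one_le_div hD).2 ?_)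
    exact dilation_le_sq_add h0.le (hω x)

theorem tendsto_div_one_add_mul_conj_iff (h0 : 0 < ρ) (h1 : ρ < 1) (hω : ∀ x, ‖ω x‖ ≤ 1) :
    Tendsto (fun x => (ω x + ρ) / (1 + ρ * conj (ω x))) l (𝓝 0) ↔ Tendsto ω l (𝓝 (-ρ)) := by
  rw [← tendsto_add_nhds_zero_iff]
  refine tendsto_zero_iff_of_norm_le_mul (a := 1 / (1 - ρ)) (b := 1 + ρ)
    (fun x => ?_) (fun x => ?_)
  all_goals
    have hA := one_sub_le_norm_one_add_mul_conj h0.le (hω x)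
    rw [norm_div]
  · exact (div_le_div_of_nonneg_left (norm_nonneg _) (by linarith) hA).trans_eq (by ring)
  · calc ‖ω x + ρ‖
        = ‖1 + ρ * conj (ω x)‖ * (‖ω x + ρ‖ / ‖1 + ρ * conj (ω x)‖) :=
          (mul_div_cancel₀ _ (by linarith)).symm
      _ ≤ (1 + ρ) * (‖ω x + ρ‖ / ‖1 + ρ * conj (ω x)‖) := by
          gcongr; exact norm_one_add_mul_conj_le h0.le (hω x)

theorem tendsto_residualRatio_iff (h0 : 0 < ρ) (h1 : ρ < 1) (hω : ∀ x, ‖ω x‖ ≤ 1) :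
    Tendsto (fun x => residualRatio ρ (ω x)) l (𝓝 ρ) ↔ Tendsto ω l (𝓝 (-ρ)) := by
  rw [← tendsto_add_nhds_zero_iff, ← tendsto_norm_sq_zero_iff (f := fun x => ω x + (ρ : ℂ)),
    ← tendsto_sub_nhds_zero_iff]
  refine tendsto_zero_iff_of_norm_le_mul (a := ρ / (1 - ρ) ^ 2) (b := 2 * (1 + ρ) ^ 2 / ρ)
    (fun x => ?_) (fun x => ?_)
  all_goals
    have hq := residualRatio_le h0.le h1 (hω x)
    rw [Real.norm_eq_abs, Real.norm_eq_abs, abs_sub_comm, abs_of_nonneg (sub_nonneg.2 hq),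
      abs_of_nonneg (sq_nonneg _)]
  · exact sub_residualRatio_le h0 h1 (hω x)
  · calc ‖ω x + ρ‖ ^ 2
        = 2 * (1 + ρ) ^ 2 / ρ * (ρ / (2 * (1 + ρ) ^ 2) * ‖ω x + ρ‖ ^ 2) := by field_simp
      _ ≤ 2 * (1 + ρ) ^ 2 / ρ * (ρ - residualRatio ρ (ω x)) := by
          gcongr; exact le_sub_residualRatio h0 h1 (hω x)

end Limits

section Sums

variable {ι : Type*} [Fintype ι]

noncomputable def rayleigh (ζ v : ι → ℂ) : ℂ :=
  (∑ k, ζ k * v k * conj (v k)) / ((∑ k, ‖v k‖ ^ 2 : ℝ) : ℂ)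

theorem sum_norm_sq_pos {v : ι → ℂ} (hv : v ≠ 0) : 0 < ∑ k, ‖v k‖ ^ 2 := by
  obtain ⟨k, hk⟩ := Function.ne_iff.mp hv
  exact sum_pos' (fun i _ => by positivity) ⟨k, mem_univ k, pow_pos (norm_pos_iff.2 hk) 2⟩

theorem norm_rayleigh_le {ζ : ι → ℂ} (hζ : ∀ k, ‖ζ k‖ ≤ 1) (v : ι → ℂ) :
    ‖rayleigh ζ v‖ ≤ 1 := by
  have hS : 0 ≤ ∑ k, ‖v k‖ ^ 2 := by positivity
  rw [rayleigh, norm_div, Complex.norm_of_nonneg hS]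
  refine div_le_one_of_le₀ ((norm_sum_le _ _).trans (sum_le_sum fun k _ => ?_)) hS
  rw [norm_mul, norm_mul, Complex.norm_conj, mul_assoc, ← sq]
  exact mul_le_of_le_one_left (by positivity) (hζ k)

theorem sum_mul_conj_eq_mul_rayleigh (ζ : ι → ℂ) {v : ι → ℂ} (hv : v ≠ 0) :
    ∑ k, ζ k * v k * conj (v k) = (∑ k, ‖v k‖ ^ 2 : ℝ) * rayleigh ζ v :=
  (mul_div_cancel₀ _ (by exact_mod_cast (sum_norm_sq_pos hv).ne')).symm

theorem sum_mul_conj_one_add_mul (ρ : ℝ) (ζ : ι → ℂ) {v : ι → ℂ} (hv : v ≠ 0) :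
    ∑ k, v k * conj ((1 + ρ * ζ k) * v k)
      = (∑ k, ‖v k‖ ^ 2 : ℝ) * (1 + ρ * conj (rayleigh ζ v)) := by
  have h := congrArg conj (sum_mul_conj_eq_mul_rayleigh ζ hv)
  rw [map_mul, Complex.conj_ofReal] at h
  rw [mul_add, mul_one, mul_left_comm, ← h, map_sum, mul_sum]
  push_cast
  rw [← sum_add_distrib]
  refine sum_congr rfl fun k _ => ?_
  rw [← Complex.mul_conj']
  simp only [map_mul, map_add, map_one, Complex.conj_ofReal, Complex.conj_conj]
  ring

theorem sum_norm_one_add_mul_sq (ρ : ℝ) {ζ : ι → ℂ} (hζ : ∀ k, ‖ζ k‖ = 1) {v : ι → ℂ}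
    (hv : v ≠ 0) :
    ∑ k, ‖(1 + ρ * ζ k) * v k‖ ^ 2 = (∑ k, ‖v k‖ ^ 2) * dilation ρ (rayleigh ζ v) := by
  have hre : (∑ k, ‖v k‖ ^ 2) * (rayleigh ζ v).re = ∑ k, ‖v k‖ ^ 2 * (ζ k).re := by
    rw [← Complex.re_ofReal_mul, ← sum_mul_conj_eq_mul_rayleigh ζ hv, Complex.re_sum]
    refine sum_congr rfl fun k _ => ?_
    rw [mul_assoc, Complex.mul_conj', ← Complex.ofReal_pow, Complex.re_mul_ofReal, mul_comm]
  rw [dilation, show ∀ S a : ℝ, S * (1 + ρ ^ 2 + 2 * ρ * a) = (1 + ρ ^ 2) * S + 2 * ρ * (S * a)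
    from fun S a => by ring, hre, mul_sum, mul_sum, ← sum_add_distrib]
  refine sum_congr rfl fun k _ => ?_
  have hζk : (ζ k).re ^ 2 + (ζ k).im ^ 2 = 1 := by
    simpa [Complex.normSq_apply, ← sq, hζ k] using Complex.normSq_eq_norm_sq (ζ k)
  rw [norm_mul, mul_pow, Complex.sq_norm (1 + _), Complex.normSq_apply]
  simp only [Complex.add_re, Complex.add_im, Complex.mul_re, Complex.mul_im, Complex.one_re,
    Complex.one_im, Complex.ofReal_re, Complex.ofReal_im]
  linear_combination ρ ^ 2 * ‖v k‖ ^ 2 * hζk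

theorem sum_norm_sub_mul_sq_s7 (v w : ι → ℂ) (c : ℂ) :
    ∑ k, ‖v k - c * w k‖ ^ 2
      = ∑ k, ‖v k‖ ^ 2 - 2 * (c * ∑ k, w k * conj (v k)).re + ‖c‖ ^ 2 * ∑ k, ‖w k‖ ^ 2 := by
  rw [mul_sum, Complex.re_sum, mul_sum, mul_sum, ← sum_sub_distrib, ← sum_add_distrib]
  refine sum_congr rfl fun k _ => ?_
  simp only [Complex.sq_norm, Complex.normSq_apply, Complex.sub_re, Complex.sub_im,
    Complex.mul_re, Complex.mul_im, Complex.conj_re, Complex.conj_im]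
  ring

theorem sum_mul_conj_div_eq_stepSize (ρ : ℝ) {ζ : ι → ℂ} (hζ : ∀ k, ‖ζ k‖ = 1) {v : ι → ℂ}
    (hv : v ≠ 0) :
    (∑ k, v k * conj ((1 + ρ * ζ k) * v k)) / ((∑ k, ‖(1 + ρ * ζ k) * v k‖ ^ 2 : ℝ) : ℂ)
      = stepSize ρ (rayleigh ζ v) := by
  rw [sum_mul_conj_one_add_mul ρ ζ hv, sum_norm_one_add_mul_sq ρ hζ hv, Complex.ofReal_mul,
    mul_div_mul_left _ _ (by exact_mod_cast (sum_norm_sq_pos hv).ne'), stepSize]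

theorem sum_norm_sub_stepSize_mul_sq {ρ : ℝ} (h0 : 0 ≤ ρ) (h1 : ρ < 1) {ζ : ι → ℂ}
    (hζ : ∀ k, ‖ζ k‖ = 1) {v : ι → ℂ} (hv : v ≠ 0) :
    ∑ k, ‖v k - stepSize ρ (rayleigh ζ v) * ((1 + ρ * ζ k) * v k)‖ ^ 2
      = (∑ k, ‖v k‖ ^ 2) * residualRatio ρ (rayleigh ζ v) ^ 2 := by
  have hω := norm_rayleigh_le (fun k => (hζ k).le) v
  have hconj : ∑ k, (1 + ρ * ζ k) * v k * conj (v k)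
      = (∑ k, ‖v k‖ ^ 2 : ℝ) * (1 + ρ * rayleigh ζ v) := by
    have h := congrArg conj (sum_mul_conj_one_add_mul ρ ζ hv)
    simp only [map_sum, map_mul, map_add, map_one, Complex.conj_ofReal, Complex.conj_conj] at h
    exact (sum_congr rfl fun k _ => mul_comm _ _).trans h
  rw [sum_norm_sub_mul_sq_s7, hconj, sum_norm_one_add_mul_sq ρ hζ hv, residualRatio_sq h0 h1 hω,
    ← one_sub_two_re_stepSize_mul_add_norm_sq (dilation_pos h0 h1 hω).ne', mul_left_comm,
    Complex.re_ofReal_mul]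
  ring

theorem sqrt_sum_norm_sub_stepSize_mul_sq_div {ρ : ℝ} (h0 : 0 ≤ ρ) (h1 : ρ < 1) {ζ : ι → ℂ}
    (hζ : ∀ k, ‖ζ k‖ = 1) {v : ι → ℂ} (hv : v ≠ 0) :
    √(∑ k, ‖v k - stepSize ρ (rayleigh ζ v) * ((1 + ρ * ζ k) * v k)‖ ^ 2) / √(∑ k, ‖v k‖ ^ 2)
      = residualRatio ρ (rayleigh ζ v) := by
  rw [sum_norm_sub_stepSize_mul_sq h0 h1 hζ hv, Real.sqrt_mul (sum_norm_sq_pos hv).le,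
    Real.sqrt_sq residualRatio_nonneg,
    mul_div_cancel_left₀ _ (Real.sqrt_pos.2 (sum_norm_sq_pos hv)).ne']

end Sums

/-- Proposition 4.2: |ω_n| ≤ 1, and the following are equivalent:
(a) q_n → ρ; (b) ω_n → −ρ; (c) λ_n → 1; (d) T_n → 0. -/
theorem stmt7 (d : ℕ) (ρ : ℝ) (h1 : 0 < ρ) (h2 : ρ < 1)
    (ζ : Fin d → ℂ) (hζ : ∀ k, ‖ζ k‖ = 1)
    (r : ℕ → Fin d → ℂ) (hrne : ∀ n, r n ≠ 0)
    (lam : ℕ → ℂ)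
    (hlam : ∀ n, lam n = (∑ k, r n k * (starRingEnd ℂ) ((1 + ρ * ζ k) * r n k)) /
      ((∑ k, ‖(1 + ρ * ζ k) * r n k‖ ^ 2 : ℝ) : ℂ))
    (hrec : ∀ n, r (n+1) = fun k => r n k - lam n * ((1 + ρ * ζ k) * r n k))
    (ω T : ℕ → ℂ) (q : ℕ → ℝ)
    (hω : ∀ n, ω n = (∑ k, ζ k * r n k * (starRingEnd ℂ) (r n k)) /
      ((∑ k, ‖r n k‖ ^ 2 : ℝ) : ℂ))
    (hT : ∀ n, T n = (1 - lam n) / (ρ * lam n))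
    (hq : ∀ n, q n = Real.sqrt (∑ k, ‖r (n+1) k‖ ^ 2) /
      Real.sqrt (∑ k, ‖r n k‖ ^ 2)) :
    (∀ n, ‖ω n‖ ≤ 1) ∧
    (Tendsto q atTop (nhds ρ) ↔ Tendsto ω atTop (nhds (-ρ : ℂ))) ∧
    (Tendsto q atTop (nhds ρ) ↔ Tendsto lam atTop (nhds (1 : ℂ))) ∧
    (Tendsto q atTop (nhds ρ) ↔ Tendsto T atTop (nhds (0 : ℂ))) := by
  have hω_eq : ∀ n, ω n = rayleigh ζ (r n) := hω
  have hω_le : ∀ n, ‖ω n‖ ≤ 1 := fun n => hω_eq n ▸ norm_rayleigh_le (fun k => (hζ k).le) (r n)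
  have hlam_eq : ∀ n, lam n = stepSize ρ (ω n) := fun n => by
    rw [hlam n, sum_mul_conj_div_eq_stepSize ρ hζ (hrne n), hω_eq n]
  have hq_eq : q = fun n => residualRatio ρ (ω n) := funext fun n => by
    rw [hq n, hrec n, hlam_eq n, hω_eq n]
    exact sqrt_sum_norm_sub_stepSize_mul_sq_div h1.le h2 hζ (hrne n)
  have hT_eq : T = fun n => (ω n + ρ) / (1 + ρ * conj (ω n)) := funext fun n => by
    rw [hT n, hlam_eq n, one_sub_stepSize_div h1 h2 (hω_le n)]
  have hq_iff : Tendsto q atTop (nhds ρ) ↔ Tendsto ω atTop (nhds (-ρ : ℂ)) :=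
    hq_eq ▸ tendsto_residualRatio_iff h1 h2 hω_le
  refine ⟨hω_le, hq_iff, ?_, ?_⟩
  · rw [hq_iff, funext hlam_eq, tendsto_stepSize_iff h1 h2 hω_le]
  · rw [hq_iff, hT_eq, tendsto_div_one_add_mul_conj_iff h1 h2 hω_le]
end

section
/- (Orthomin(1) in dimension 2) Let d = 2, A = diag[μ₁, μ₂] with μ₁, μ₂ nonzero, and r_0 ∈ ℂ² with both entries nonzero. Define r_{n+1} = r_n − λ_n A r_n with λ_n = ⟨r_n, A r_n⟩/‖A r_n‖². Then |r₁²|/|r₁¹| = (|μ₁|/|μ₂|)·(|r₀¹|/|r₀²|), where superscripts denote components; consequently |r₂²|/|r₂¹| = |r₀²|/|r₀¹|, the sequence ω_n = (ζ₁|r_n¹|² + ζ₂|r_n²|²)/‖r_n‖² is periodic with period 2, and the ratio q_n = ‖r_{n+1}‖/‖r_n‖ is constant in n. -/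
/-!
For `A = diag(μ₁, μ₂)` and `r = (a, b)` the terms `μ₁ a conj(μ₁ a)` cancel in
`(1 - λ μ₁) ‖A r‖² = ‖A r‖² - μ₁ ⟨r, A r⟩`, leaving `(μ₂ - μ₁) b conj(μ₂ b)`; symmetrically for the
second component. So the moduli `(x, y)` of the components follow an explicit real map, which sends
`y / x` to `(|μ₁| / |μ₂|) (x / y)`. Two steps therefore restore the ratio `y / x`, and `ω_n` depends
only on that ratio. For the residual norms the same map gives `‖r_{n+2}‖² ‖r_n‖² = ‖r_{n+1}‖⁴`,
which is the constancy of `q_n`.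
-/

open ComplexConjugate

noncomputable def orthominStepLength (μ₁ μ₂ a b : ℂ) : ℂ :=
  (a * conj (μ₁ * a) + b * conj (μ₂ * b)) / (μ₁ * a * conj (μ₁ * a) + μ₂ * b * conj (μ₂ * b))

lemma orthominStepLength_swap (μ₁ μ₂ a b : ℂ) :
    orthominStepLength μ₂ μ₁ b a = orthominStepLength μ₁ μ₂ a b := by
  simp only [orthominStepLength, add_comm]

lemma mul_conj_add_mul_conj_eq (u v : ℂ) :
    u * conj u + v * conj v = ((‖u‖ ^ 2 + ‖v‖ ^ 2 : ℝ) : ℂ) := by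
  push_cast; simp only [Complex.mul_conj']

lemma sub_orthominStepLength_mul {μ₁ a : ℂ} (μ₂ b : ℂ) (h : μ₁ * a ≠ 0) :
    a - orthominStepLength μ₁ μ₂ a b * (μ₁ * a) =
      (μ₂ - μ₁) * (b * conj (μ₂ * b)) * a / ((‖μ₁ * a‖ ^ 2 + ‖μ₂ * b‖ ^ 2 : ℝ) : ℂ) := by
  have hpos : 0 < ‖μ₁ * a‖ ^ 2 + ‖μ₂ * b‖ ^ 2 := by
    have : 0 < ‖μ₁ * a‖ := norm_pos_iff.2 h
    positivity
  have hD : μ₁ * a * conj (μ₁ * a) + μ₂ * b * conj (μ₂ * b) ≠ 0 := by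
    rw [mul_conj_add_mul_conj_eq]; exact_mod_cast hpos.ne'
  rw [orthominStepLength, ← mul_conj_add_mul_conj_eq, div_mul_eq_mul_div, sub_div' hD]
  ring

lemma norm_sub_orthominStepLength_mul {μ₁ a : ℂ} (μ₂ b : ℂ) (h : μ₁ * a ≠ 0) :
    ‖a - orthominStepLength μ₁ μ₂ a b * (μ₁ * a)‖ =
      ‖μ₁ - μ₂‖ * ‖μ₂‖ * ‖b‖ ^ 2 * ‖a‖ / (‖μ₁‖ ^ 2 * ‖a‖ ^ 2 + ‖μ₂‖ ^ 2 * ‖b‖ ^ 2) := by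
  rw [sub_orthominStepLength_mul μ₂ b h, norm_div, Complex.norm_real,
    Real.norm_of_nonneg (by positivity)]
  simp only [norm_mul, Complex.norm_conj, norm_sub_rev μ₂, mul_pow]
  ring

/-- `(‖a‖, ‖b‖) ↦ (‖a'‖, ‖b'‖)` for one step, where `mᵢ = ‖μᵢ‖` and `K = ‖μ₁ - μ₂‖`. -/
noncomputable def moduliStep (m₁ m₂ K : ℝ) (p : ℝ × ℝ) : ℝ × ℝ :=
  (K * m₂ * p.2 ^ 2 * p.1 / (m₁ ^ 2 * p.1 ^ 2 + m₂ ^ 2 * p.2 ^ 2),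
    K * m₁ * p.1 ^ 2 * p.2 / (m₁ ^ 2 * p.1 ^ 2 + m₂ ^ 2 * p.2 ^ 2))

section moduliStep

variable {m₁ m₂ K : ℝ} {p : ℝ × ℝ}

lemma moduliStep_snd_div_fst (hm₁ : m₁ ≠ 0) (hm₂ : m₂ ≠ 0) (hK : K ≠ 0) (h₁ : p.1 ≠ 0)
    (h₂ : p.2 ≠ 0) :
    (moduliStep m₁ m₂ K p).2 / (moduliStep m₁ m₂ K p).1 = m₁ / m₂ * (p.1 / p.2) := by
  have : m₁ ^ 2 * p.1 ^ 2 + m₂ ^ 2 * p.2 ^ 2 ≠ 0 := by positivity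
  simp only [moduliStep]
  field_simp

lemma moduliStep_ne_zero (hm₁ : m₁ ≠ 0) (hm₂ : m₂ ≠ 0) (hK : K ≠ 0) (h₁ : p.1 ≠ 0)
    (h₂ : p.2 ≠ 0) : (moduliStep m₁ m₂ K p).1 ≠ 0 ∧ (moduliStep m₁ m₂ K p).2 ≠ 0 := by
  have : m₁ ^ 2 * p.1 ^ 2 + m₂ ^ 2 * p.2 ^ 2 ≠ 0 := by positivity
  simp only [moduliStep]
  constructor <;> positivity

lemma sq_add_sq_moduliStep_moduliStep (hm₁ : m₁ ≠ 0) (hm₂ : m₂ ≠ 0) (hK : K ≠ 0)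
    (h₁ : p.1 ≠ 0) (h₂ : p.2 ≠ 0) :
    let p' := moduliStep m₁ m₂ K p
    let p'' := moduliStep m₁ m₂ K p'
    (p''.1 ^ 2 + p''.2 ^ 2) * (p.1 ^ 2 + p.2 ^ 2) = (p'.1 ^ 2 + p'.2 ^ 2) ^ 2 := by
  intro p' p''
  obtain ⟨h₁', h₂'⟩ := moduliStep_ne_zero hm₁ hm₂ hK h₁ h₂
  have : m₁ ^ 2 * p.1 ^ 2 + m₂ ^ 2 * p.2 ^ 2 ≠ 0 := by positivity
  have : m₁ ^ 2 * p'.1 ^ 2 + m₂ ^ 2 * p'.2 ^ 2 ≠ 0 := by positivity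
  simp only [p'', moduliStep]
  field_simp
  simp only [p', moduliStep]
  field_simp
  ring

end moduliStep

lemma weightedMean_eq_of_div_eq {x y x' y' : ℝ} (hx : x ≠ 0) (hx' : x' ≠ 0)
    (h : y' / x' = y / x) (ζ₁ ζ₂ : ℂ) :
    (ζ₁ * ((x' ^ 2 : ℝ) : ℂ) + ζ₂ * ((y' ^ 2 : ℝ) : ℂ)) / ((x' ^ 2 + y' ^ 2 : ℝ) : ℂ) =
      (ζ₁ * ((x ^ 2 : ℝ) : ℂ) + ζ₂ * ((y ^ 2 : ℝ) : ℂ)) / ((x ^ 2 + y ^ 2 : ℝ) : ℂ) := by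
  rw [div_eq_div_iff hx' hx] at h
  have hc : (y' : ℂ) * x = y * x' := by exact_mod_cast h
  rw [div_eq_div_iff (by exact_mod_cast (by positivity : x' ^ 2 + y' ^ 2 ≠ 0))
    (by exact_mod_cast (by positivity : x ^ 2 + y ^ 2 ≠ 0))]
  push_cast
  linear_combination (ζ₂ - ζ₁) * (y' * x + y * x') * hc

lemma sqrt_div_sqrt_eq_of_mul_eq_sq {a b c : ℝ} (ha : 0 < a) (hb : 0 < b) (h : c * a = b ^ 2) :
    √c / √b = √b / √a := by
  rw [div_eq_div_iff (Real.sqrt_ne_zero'.2 hb) (Real.sqrt_ne_zero'.2 ha), ← Real.sqrt_mul' c ha.le,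
    h, Real.sqrt_sq hb.le, Real.mul_self_sqrt hb.le]

/-- Orthomin(1) in dimension 2: |r₁²|/|r₁¹| = (|μ₁|/|μ₂|)(|r₀¹|/|r₀²|),
hence |r₂²|/|r₂¹| = |r₀²|/|r₀¹|, ω_n is 2-periodic, and q_n is constant. -/
theorem stmt11 (μ₁ μ₂ : ℂ) (hμ1 : μ₁ ≠ 0) (hμ2 : μ₂ ≠ 0) (hne : μ₁ ≠ μ₂)
    (ζ₁ ζ₂ : ℂ)
    (μ : Fin 2 → ℂ) (hμ : μ = ![μ₁, μ₂])
    (r : ℕ → Fin 2 → ℂ) (hrne : ∀ n k, r n k ≠ 0)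
    (lam : ℕ → ℂ)
    (hlam : ∀ n, lam n = (∑ k, r n k * (starRingEnd ℂ) (μ k * r n k)) /
      (∑ k, (μ k * r n k) * (starRingEnd ℂ) (μ k * r n k)))
    (hrec : ∀ n, r (n+1) = fun k => r n k - lam n * (μ k * r n k))
    (ω : ℕ → ℂ)
    (hω : ∀ n, ω n = (ζ₁ * ((‖r n 0‖ ^ 2 : ℝ) : ℂ) +
        ζ₂ * ((‖r n 1‖ ^ 2 : ℝ) : ℂ)) /
      ((‖r n 0‖ ^ 2 + ‖r n 1‖ ^ 2 : ℝ) : ℂ))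
    (q : ℕ → ℝ)
    (hq : ∀ n, q n = Real.sqrt (‖r (n+1) 0‖ ^ 2 + ‖r (n+1) 1‖ ^ 2) /
      Real.sqrt (‖r n 0‖ ^ 2 + ‖r n 1‖ ^ 2)) :
    ‖r 1 1‖ / ‖r 1 0‖ =
      (‖μ₁‖ / ‖μ₂‖) * (‖r 0 0‖ / ‖r 0 1‖) ∧
    ‖r 2 1‖ / ‖r 2 0‖ = ‖r 0 1‖ / ‖r 0 0‖ ∧
    (∀ n, ω (n+2) = ω n) ∧ (∀ n, q (n+1) = q n) := by
  subst hμ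
  set P : ℕ → ℝ × ℝ := fun n => (‖r n 0‖, ‖r n 1‖) with hPdef
  have hP0 n : (P n).1 ≠ 0 := norm_ne_zero_iff.2 (hrne n 0)
  have hP1 n : (P n).2 ≠ 0 := norm_ne_zero_iff.2 (hrne n 1)
  have hm₁ : ‖μ₁‖ ≠ 0 := norm_ne_zero_iff.2 hμ1
  have hm₂ : ‖μ₂‖ ≠ 0 := norm_ne_zero_iff.2 hμ2
  have hK : ‖μ₁ - μ₂‖ ≠ 0 := norm_ne_zero_iff.2 (sub_ne_zero.2 hne)
  have hstep n : P (n + 1) = moduliStep ‖μ₁‖ ‖μ₂‖ ‖μ₁ - μ₂‖ (P n) := by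
    have hl : lam n = orthominStepLength μ₁ μ₂ (r n 0) (r n 1) := by
      rw [hlam n]
      simp only [Fin.sum_univ_two, Matrix.cons_val_zero, Matrix.cons_val_one]
      rfl
    have h₀ := norm_sub_orthominStepLength_mul μ₂ (r n 1) (mul_ne_zero hμ1 (hrne n 0))
    have h₁ := norm_sub_orthominStepLength_mul μ₁ (r n 0) (mul_ne_zero hμ2 (hrne n 1))
    rw [orthominStepLength_swap, norm_sub_rev μ₂, add_comm] at h₁
    simp [hPdef, moduliStep, hrec n, hl, h₀, h₁]
  have hratio n : (P (n + 1)).2 / (P (n + 1)).1 = ‖μ₁‖ / ‖μ₂‖ * ((P n).1 / (P n).2) := by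
    rw [hstep]; exact moduliStep_snd_div_fst hm₁ hm₂ hK (hP0 n) (hP1 n)
  have hratio₂ n : (P (n + 2)).2 / (P (n + 2)).1 = (P n).2 / (P n).1 := by
    rw [hratio, ← inv_div (P (n + 1)).2, hratio]
    field_simp [hP0, hP1]
  refine ⟨hratio 0, hratio₂ 0, fun n => ?_, fun n => ?_⟩
  · rw [hω, hω]
    exact weightedMean_eq_of_div_eq (hP0 n) (hP0 (n + 2)) (hratio₂ n) ζ₁ ζ₂
  · have hS n : 0 < (P n).1 ^ 2 + (P n).2 ^ 2 := by have := hP0 n; positivity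
    rw [hq, hq]
    refine sqrt_div_sqrt_eq_of_mul_eq_sq (hS n) (hS (n + 1)) ?_
    simpa only [← hstep] using sq_add_sq_moduliStep_moduliStep hm₁ hm₂ hK (hP0 n) (hP1 n)
end

section
/- With the moments ω_{n,j} = ⟨Uʲ r_n, r_n⟩/⟨r_n, r_n⟩ for the Orthomin(1) iteration on A = I + ρU (U diagonal unitary), the recurrence ω_{n+1,j} = [(1+|T_n|²)ω_{n,j} − T_n ω_{n,j−1} − conj(T_n) ω_{n,j+1}] / [1+|T_n|² − 2Re(conj(T_n) ω_{n,1})] holds for all j ≥ 1. -/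
/-!
Writing `a = 1 - λ` and `b = ρλ`, the iteration multiplies each coordinate by `a - b ζ_k`,
which is `b (T - ζ_k)` when `b ≠ 0`; when `b = 0` it is the constant `a`, and `T = a / 0 = 0`
makes the right-hand side collapse to `ω_j`. Normalized moments do not see
a nonzero scalar factor, and since `ζ̄_k = ζ_k⁻¹` the weight
`|T - ζ_k|² = 1 + |T|² - T ζ̄_k - T̄ ζ_k` shifts the moment index by `∓1`. The denominator is the
case `j = 0`, where `ζ̄_k` turns the `(j - 1)`-st moment into `conj ω₁`.
-/

open ComplexConjugate

namespace Orthomin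

variable {ι : Type*} [Fintype ι]

/-- The unnormalized moment `⟨Uʲ v, v⟩` of `U = diag ζ`. -/
noncomputable def moment (ζ v : ι → ℂ) (j : ℕ) : ℂ := ∑ k, ζ k ^ j * v k * conj (v k)

noncomputable def normalizedMoment (ζ v : ι → ℂ) (j : ℕ) : ℂ := moment ζ v j / moment ζ v 0

lemma moment_zero (ζ v : ι → ℂ) : moment ζ v 0 = ((∑ k, ‖v k‖ ^ 2 : ℝ) : ℂ) := by
  simp only [moment, pow_zero, one_mul, Complex.mul_conj, Complex.normSq_eq_norm_sq,
    Complex.ofReal_sum, Complex.ofReal_pow]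

lemma moment_zero_ne_zero (ζ : ι → ℂ) {v : ι → ℂ} (hv : v ≠ 0) : moment ζ v 0 ≠ 0 := by
  obtain ⟨k, hk⟩ := Function.ne_iff.mp hv
  rw [moment_zero, Complex.ofReal_ne_zero]
  exact (Finset.sum_pos' (fun i _ => by positivity)
    ⟨k, Finset.mem_univ k, by simpa [sq_pos_iff] using hk⟩).ne'

lemma moment_smul (ζ v : ι → ℂ) (c : ℂ) (j : ℕ) :
    moment ζ (c • v) j = c * conj c * moment ζ v j := by
  simp only [moment, Pi.smul_apply, smul_eq_mul, map_mul, Finset.mul_sum]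
  exact Finset.sum_congr rfl fun _ _ => by ring

lemma normalizedMoment_smul (ζ v : ι → ℂ) {c : ℂ} (hc : c ≠ 0) (j : ℕ) :
    normalizedMoment ζ (c • v) j = normalizedMoment ζ v j := by
  have hcc : c * conj c ≠ 0 := mul_ne_zero hc ((map_ne_zero _).mpr hc)
  simp only [normalizedMoment, moment_smul, mul_div_mul_left _ _ hcc]

section Unimodular

variable {z : ℂ} (hz : ‖z‖ = 1) (T : ℂ)
include hz

lemma conj_mul_self_of_norm_eq_one : conj z * z = 1 := by
  rw [mul_comm, Complex.mul_conj, Complex.normSq_eq_norm_sq, hz]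
  norm_num

lemma pow_succ_mul_sub_mul_conj_sub (j : ℕ) :
    z ^ (j + 1) * ((T - z) * conj (T - z)) =
      (1 + T * conj T) * z ^ (j + 1) - T * z ^ j - conj T * z ^ (j + 2) := by
  simp only [map_sub]
  linear_combination (z ^ (j + 1) - T * z ^ j) * conj_mul_self_of_norm_eq_one hz

lemma sub_mul_conj_sub : (T - z) * conj (T - z) = 1 + T * conj T - T * conj z - conj T * z := by
  simp only [map_sub]
  linear_combination conj_mul_self_of_norm_eq_one hz

end Unimodular

variable {ζ : ι → ℂ} (hζ : ∀ k, ‖ζ k‖ = 1) (T : ℂ) (v : ι → ℂ)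
include hζ

lemma moment_sub_mul_succ (j : ℕ) :
    moment ζ (fun k => (T - ζ k) * v k) (j + 1) =
      (1 + T * conj T) * moment ζ v (j + 1) - T * moment ζ v j -
        conj T * moment ζ v (j + 2) := by
  simp only [moment, map_mul, Finset.mul_sum, ← Finset.sum_sub_distrib]
  refine Finset.sum_congr rfl fun k _ => ?_
  linear_combination v k * conj (v k) * pow_succ_mul_sub_mul_conj_sub (hζ k) T j

lemma moment_sub_mul_zero :
    moment ζ (fun k => (T - ζ k) * v k) 0 =
      (1 + T * conj T) * moment ζ v 0 - (2 * (conj T * moment ζ v 1).re : ℝ) := by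
  have hre : ((2 * (conj T * moment ζ v 1).re : ℝ) : ℂ) =
      ∑ k, (T * conj (ζ k) + conj T * ζ k) * (v k * conj (v k)) := by
    rw [← Complex.add_conj]
    simp only [moment, map_mul, map_sum, pow_one, Complex.conj_conj, Finset.mul_sum,
      ← Finset.sum_add_distrib]
    exact Finset.sum_congr rfl fun k _ => by ring
  rw [hre]
  simp only [moment, map_mul, Finset.mul_sum, ← Finset.sum_sub_distrib]
  refine Finset.sum_congr rfl fun k _ => ?_
  linear_combination v k * conj (v k) * sub_mul_conj_sub (hζ k) T

lemma normalizedMoment_sub_mul_succ {v : ι → ℂ} (hv : v ≠ 0) (j : ℕ) :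
    normalizedMoment ζ (fun k => (T - ζ k) * v k) (j + 1) =
      (((1 + ‖T‖ ^ 2 : ℝ) : ℂ) * normalizedMoment ζ v (j + 1) - T * normalizedMoment ζ v j -
          conj T * normalizedMoment ζ v (j + 2)) /
        ((1 + ‖T‖ ^ 2 - 2 * (conj T * normalizedMoment ζ v 1).re : ℝ) : ℂ) := by
  have hm := moment_zero_ne_zero ζ hv
  rw [moment_zero] at hm
  have hnorm : T * conj T = ((‖T‖ ^ 2 : ℝ) : ℂ) := by
    rw [Complex.mul_conj, Complex.normSq_eq_norm_sq]
  simp only [normalizedMoment, moment_sub_mul_succ hζ, moment_sub_mul_zero hζ, moment_zero,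
    ← mul_div_assoc, Complex.div_ofReal_re, hnorm]
  generalize (∑ k, ‖v k‖ ^ 2) = m at hm ⊢
  push_cast
  field_simp

end Orthomin

open Orthomin

theorem stmt12_general (d : ℕ) (ρ : ℝ)
    (ζ : Fin d → ℂ) (hζ : ∀ k, ‖ζ k‖ = 1)
    (r r' : Fin d → ℂ) (hr'ne : r' ≠ 0)
    (lam T : ℂ)
    (hT : T = (1 - lam) / (ρ * lam))
    (hrec : r' = fun k => r k - lam * ((1 + ρ * ζ k) * r k))
    (ω ω' : ℕ → ℂ)
    (hω : ∀ j, ω j = (∑ k, ζ k ^ j * r k * (starRingEnd ℂ) (r k)) /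
      ((∑ k, ‖r k‖ ^ 2 : ℝ) : ℂ))
    (hω' : ∀ j, ω' j = (∑ k, ζ k ^ j * r' k * (starRingEnd ℂ) (r' k)) /
      ((∑ k, ‖r' k‖ ^ 2 : ℝ) : ℂ)) :
    ∀ j : ℕ, 1 ≤ j →
      ω' j = (((1 + ‖T‖ ^ 2 : ℝ) : ℂ) * ω j - T * ω (j - 1) -
          (starRingEnd ℂ) T * ω (j + 1)) /
        ((1 + ‖T‖ ^ 2 - 2 * ((starRingEnd ℂ) T * ω 1).re : ℝ) : ℂ) := by
  intro j hj
  obtain ⟨j, rfl⟩ := Nat.exists_eq_add_of_le' hj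
  obtain rfl : ω = normalizedMoment ζ r :=
    funext fun i => by rw [hω, normalizedMoment, moment_zero, moment]
  obtain rfl : ω' = normalizedMoment ζ r' :=
    funext fun i => by rw [hω', normalizedMoment, moment_zero, moment]
  rw [Nat.add_sub_cancel]
  by_cases hb : (ρ : ℂ) * lam = 0
  · have hr' : r' = (1 - lam) • r := by
      rw [hrec]
      funext k
      simp only [Pi.smul_apply, smul_eq_mul]
      linear_combination -(ζ k * r k) * hb
    rw [hr'] at hr'ne ⊢
    simp [normalizedMoment_smul _ _ (left_ne_zero_of_smul hr'ne), hT, hb]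
  · have hr' : r' = ((ρ : ℂ) * lam) • fun k => (T - ζ k) * r k := by
      have hTb : T * (ρ * lam) = 1 - lam := by rw [hT, div_mul_cancel₀ _ hb]
      rw [hrec]
      funext k
      simp only [Pi.smul_apply, smul_eq_mul]
      linear_combination -r k * hTb
    rw [hr'] at hr'ne ⊢
    obtain ⟨hb, hw⟩ := smul_ne_zero_iff.mp hr'ne
    rw [normalizedMoment_smul _ _ hb,
      normalizedMoment_sub_mul_succ hζ T (by rintro rfl; exact hw (funext fun k => mul_zero _))]

/-- Proposition 4.4: the moments ω_{n,j} = ⟨Uʲ r_n, r_n⟩/⟨r_n, r_n⟩ satisfy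
ω_{n+1,j} = [(1+|T_n|²)ω_{n,j} − T_n ω_{n,j−1} − T̄_n ω_{n,j+1}] /
[1+|T_n|² − 2Re(T̄_n ω_{n,1})] for all j ≥ 1. -/
theorem stmt12 (d : ℕ) (ρ : ℝ) (h1 : 0 < ρ) (h2 : ρ < 1)
    (ζ : Fin d → ℂ) (hζ : ∀ k, ‖ζ k‖ = 1)
    (r r' : Fin d → ℂ) (hr : r ≠ 0) (hr'ne : r' ≠ 0)
    (lam T : ℂ)
    (hlam : lam = (∑ k, r k * (starRingEnd ℂ) ((1 + ρ * ζ k) * r k)) /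
      ((∑ k, ‖(1 + ρ * ζ k) * r k‖ ^ 2 : ℝ) : ℂ))
    (hT : T = (1 - lam) / (ρ * lam))
    (hrec : r' = fun k => r k - lam * ((1 + ρ * ζ k) * r k))
    (ω ω' : ℕ → ℂ)
    (hω : ∀ j, ω j = (∑ k, ζ k ^ j * r k * (starRingEnd ℂ) (r k)) /
      ((∑ k, ‖r k‖ ^ 2 : ℝ) : ℂ))
    (hω' : ∀ j, ω' j = (∑ k, ζ k ^ j * r' k * (starRingEnd ℂ) (r' k)) /
      ((∑ k, ‖r' k‖ ^ 2 : ℝ) : ℂ)) :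
    ∀ j : ℕ, 1 ≤ j →
      ω' j = (((1 + ‖T‖ ^ 2 : ℝ) : ℂ) * ω j - T * ω (j - 1) -
          (starRingEnd ℂ) T * ω (j + 1)) /
        ((1 + ‖T‖ ^ 2 - 2 * ((starRingEnd ℂ) T * ω 1).re : ℝ) : ℂ) :=
  stmt12_general d ρ ζ hζ r r' hr'ne lam T hT hrec ω ω' hω hω'
end

section
/- Let Φ_n(X,q) = ∏_{k=1}^n (X − q^{2k−1}) = Σ_{i=0}^n a_i Xⁱ with coefficients a_i = a_i(q). Then (Σ_{i=0}^{n−1} a_i a_{i+1}) / (Σ_{i=0}^n a_i²) = −q(1 − q^{2n})/(1 − q^{2n+2}), for all q such that the denominators are nonzero; equivalently, (1 − q^{2n+2})·Σ_{i=0}^{n−1} a_i a_{i+1} = −q(1 − q^{2n})·Σ_{i=0}^n a_i² as polynomial identities in q. -/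
/-!
Put `P = Φ_n · reverse Φ_n`; its coefficients at `Xⁿ` and `Xⁿ⁺¹` are `Σ aᵢ²` and `Σ aᵢ aᵢ₊₁`.
The substitution `X ↦ q²X` moves each root `q^(2k-1)` of `Φ_n` and `q^(1-2k)` of its reverse one
step along the progression, so only boundary factors change:
`(qX - q^(2n)) P(q²X) = -q^(2n) (1 - q^(2n+1) X) P(X)`.
Comparing coefficients of `Xⁿ⁺¹` and cancelling `q^(2n)` gives the identity; at `q = 0` both
sides vanish.
-/

open Finset Polynomial

namespace Polynomial

variable {R : Type*}

theorem coeff_mul_reverse_natDegree [CommSemiring R] (p : R[X]) :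
    (p * p.reverse).coeff p.natDegree = ∑ i ∈ range (p.natDegree + 1), p.coeff i ^ 2 := by
  rw [coeff_mul, Nat.sum_antidiagonal_eq_sum_range_succ_mk]
  refine sum_congr rfl fun i hi => ?_
  rw [coeff_reverse, revAt_le (Nat.sub_le _ _), Nat.sub_sub_self (mem_range_succ_iff.mp hi), sq]

theorem coeff_mul_reverse_natDegree_add_one [CommSemiring R] (p : R[X]) :
    (p * p.reverse).coeff (p.natDegree + 1) =
      ∑ i ∈ range p.natDegree, p.coeff i * p.coeff (i + 1) := by
  have htop : p.coeff (p.natDegree + 1) = 0 := coeff_eq_zero_of_natDegree_lt (Nat.lt_succ_self _)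
  rw [coeff_mul, Nat.sum_antidiagonal_succ, coeff_reverse,
    revAt_eq_self_of_lt (Nat.lt_succ_self _), htop, mul_zero, zero_add,
    Nat.sum_antidiagonal_eq_sum_range_succ_mk, sum_range_succ, Nat.sub_self, coeff_reverse,
    revAt_zero, htop, zero_mul, add_zero]
  refine sum_congr rfl fun i hi => ?_
  rw [coeff_reverse, revAt_le (Nat.sub_le _ _), Nat.sub_sub_self (mem_range.mp hi).le, mul_comm]

theorem reverse_X_sub_C [Ring R] [Nontrivial R] (c : R) : (X - C c).reverse = 1 - C c * X := by
  rw [sub_eq_add_neg, ← C_neg, reverse_add_C, natDegree_X, pow_one, C_neg, neg_mul,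
    ← sub_eq_add_neg, ← mul_one X, reverse_X_mul, ← C_1, reverse_C, C_1, mul_one]

end Polynomial

section Phi

variable {R : Type*} [CommRing R]

noncomputable def Φ (q : R) (n : ℕ) : R[X] := ∏ k ∈ range n, (X - C (q ^ (2 * k + 1)))

theorem Φ_succ (q : R) (n : ℕ) : Φ q (n + 1) = Φ q n * (X - C (q ^ (2 * n + 1))) :=
  prod_range_succ _ n

theorem Φ_zero_left (n : ℕ) : Φ (0 : R) n = X ^ n := by
  simp [Φ]

theorem monic_Φ (q : R) (n : ℕ) : (Φ q n).Monic :=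
  monic_prod_of_monic _ _ fun _ _ => monic_X_sub_C _

section Nontrivial

variable [Nontrivial R]

theorem natDegree_Φ (q : R) (n : ℕ) : (Φ q n).natDegree = n := by
  rw [Φ, natDegree_finsetProd_X_sub_C_eq_card, card_range]

theorem reverse_Φ_succ (q : R) (n : ℕ) :
    (Φ q (n + 1)).reverse = (Φ q n).reverse * (1 - C (q ^ (2 * n + 1)) * X) := by
  rw [Φ_succ, reverse_mul, reverse_X_sub_C]
  rw [(monic_Φ q n).leadingCoeff, leadingCoeff_X_sub_C, one_mul]
  exact one_ne_zero

theorem Φ_mul_reverse_comp (q : R) (n : ℕ) :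
    (C q * X - C (q ^ (2 * n))) * (Φ q n * (Φ q n).reverse).comp (C (q ^ 2) * X) =
      -(C (q ^ (2 * n)) * (1 - C (q ^ (2 * n + 1)) * X) * (Φ q n * (Φ q n).reverse)) := by
  induction n with
  | zero =>
    have hrev : (1 : R[X]).reverse = 1 := by simpa using reverse_C (1 : R)
    simp only [Φ, range_zero, prod_empty, hrev, mul_one, one_comp, mul_zero, pow_zero, map_one,
      zero_add, pow_one]
    ring
  | succ n ih =>
    rw [reverse_Φ_succ, Φ_succ]
    simp only [mul_comp, sub_comp, one_comp, X_comp, C_comp, C_pow, pow_comp] at ih ⊢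
    -- `qX - q^(2n+2) = q (X - q^(2n+1))` and `q²X - q^(2n+1) = q (qX - q^(2n))`
    linear_combination C q ^ 2 * (X - C q ^ (2 * n + 1)) * (1 - C q ^ (2 * n + 3) * X) * ih

end Nontrivial

variable [IsDomain R]

theorem Φ_mul_reverse_coeff_succ {q : R} (hq : q ≠ 0) (n : ℕ) :
    (1 - q ^ (2 * n + 2)) * (Φ q n * (Φ q n).reverse).coeff (n + 1) =
      -q * (1 - q ^ (2 * n)) * (Φ q n * (Φ q n).reverse).coeff n := by
  have h := congrArg (coeff · (n + 1)) (Φ_mul_reverse_comp q n)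
  simp only [sub_mul, coeff_sub, coeff_neg, mul_assoc, coeff_C_mul, coeff_X_mul, one_mul,
    comp_C_mul_X_coeff] at h
  apply mul_left_cancel₀ (pow_ne_zero (2 * n) hq)
  linear_combination h

theorem Φ_sum_coeff_mul_coeff_succ (q : R) (n : ℕ) :
    (1 - q ^ (2 * n + 2)) * ∑ i ∈ range n, (Φ q n).coeff i * (Φ q n).coeff (i + 1) =
      -q * (1 - q ^ (2 * n)) * ∑ i ∈ range (n + 1), (Φ q n).coeff i ^ 2 := by
  rcases eq_or_ne q 0 with rfl | hq
  · refine (mul_eq_zero_of_right _ (sum_eq_zero fun i hi => ?_)).trans (by simp)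
    rw [Φ_zero_left, coeff_X_pow, if_neg (mem_range.mp hi).ne, zero_mul]
  have hsq := coeff_mul_reverse_natDegree (Φ q n)
  have hadj := coeff_mul_reverse_natDegree_add_one (Φ q n)
  rw [natDegree_Φ] at hsq hadj
  rw [← hsq, ← hadj]
  exact Φ_mul_reverse_coeff_succ hq n

end Phi

theorem stmt14_general (n : ℕ) (q : ℂ) :
    (1 - q ^ (2 * n + 2)) *
        ∑ i ∈ Finset.range n,
          (∏ k ∈ Finset.range n, (X - C (q ^ (2 * k + 1)))).coeff i *
            (∏ k ∈ Finset.range n, (X - C (q ^ (2 * k + 1)))).coeff (i + 1) =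
      -q * (1 - q ^ (2 * n)) *
        ∑ i ∈ Finset.range (n + 1),
          ((∏ k ∈ Finset.range n, (X - C (q ^ (2 * k + 1)))).coeff i) ^ 2 :=
  Φ_sum_coeff_mul_coeff_succ q n

/-- Lemma 4.11 (MacMahon-type identity): with Φ_n(X,q) = ∏_{k=1}^n (X − q^{2k−1})
= Σ_{i=0}^n a_i Xⁱ, one has
(1 − q^{2n+2})·Σ_{i=0}^{n−1} a_i a_{i+1} = −q(1 − q^{2n})·Σ_{i=0}^n a_i². -/
theorem stmt14 (n : ℕ) (hn : 1 ≤ n) (q : ℂ) :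
    (1 - q ^ (2 * n + 2)) *
        ∑ i ∈ Finset.range n,
          (∏ k ∈ Finset.range n, (X - C (q ^ (2 * k + 1)))).coeff i *
            (∏ k ∈ Finset.range n, (X - C (q ^ (2 * k + 1)))).coeff (i + 1) =
      -q * (1 - q ^ (2 * n)) *
        ∑ i ∈ Finset.range (n + 1),
          ((∏ k ∈ Finset.range n, (X - C (q ^ (2 * k + 1)))).coeff i) ^ 2 :=
  stmt14_general n q
end

section
/- Define on the unit circle S¹ with Haar probability measure dμ₀ the sequences ω_n = (∫ z dμ_n)/(∫ dμ_n), T_n = (ω_n + ρ)/(ρ·conj(ω_n) + 1), dμ_{n+1}(z) = |z − T_n|² dμ_n(z), starting from dμ₀, where 0 < ρ < 1. Then T_n = ρ^{2n+1} for all n ≥ 0; in particular T_n → 0. -/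
open scoped Real
open Filter

/-!
By induction, once `T k = ρ^(2k+1)` for `k < n`, the weight is `w n z = ∏_{k<n} |z - ρ^(2k+1)|²`.
On the unit circle this equals `z^(-n) Q(z)` with `Q = ∏_{k<n} (X - ρ^(2k+1)) (1 - ρ^(2k+1) X)`,
so the two integrals defining `ω n` are `2π` times the coefficients of `X^(n-1)` and `X^n` in `Q`.
The substitution `X ↦ ρ² X` moves every root `ρ^(2k+1)` of `Q` one step along the geometric
progression, so `Q(ρ² X)` and `Q(X)` differ only by their boundary linear factors. Comparing
coefficients in this functional equation gives `ω n = -ρ (1 - ρ^(2n)) / (1 - ρ^(2n+2))`, and the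
Möbius map `ω ↦ (ω + ρ) / (ρ ω + 1)` sends this value to `ρ^(2n+1)`.
-/

open Polynomial Finset Complex

noncomputable def oddPowerProd {R : Type*} [CommRing R] (a : R) (n : ℕ) : R[X] :=
  ∏ k ∈ range n, (X - C a ^ (2 * k + 1)) * (1 - C a ^ (2 * k + 1) * X)

theorem oddPowerProd_comp {R : Type*} [CommRing R] (a : R) (n : ℕ) :
    (oddPowerProd a n).comp (C a ^ 2 * X) * (C a ^ 2 * X - C a ^ (2 * n + 1)) =
      -C a ^ (2 * n + 1) * oddPowerProd a n * (1 - C a ^ (2 * n + 1) * X) := by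
  induction n with
  | zero => simp only [oddPowerProd, range_zero, prod_empty, one_comp]; ring
  | succ n ih =>
    simp only [oddPowerProd, prod_range_succ, mul_comp, sub_comp, one_comp, X_comp, pow_comp,
      C_comp] at ih ⊢
    linear_combination (1 - C a ^ (2 * n + 1) * (C a ^ 2 * X)) *
      (C a ^ 2 * X - C a ^ (2 * (n + 1) + 1)) * ih

-- `(X * P).coeff n` is `P.coeff (n - 1)` for `n ≥ 1` and `0` for `n = 0`, with no case split.
theorem coeff_X_mul_oddPowerProd {K : Type*} [Field K] {a : K} (ha : a ≠ 0) (n : ℕ) :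
    (X * oddPowerProd a n).coeff n * (1 - a ^ (2 * n + 2)) =
      -a * (1 - a ^ (2 * n)) * (oddPowerProd a n).coeff n := by
  set P := oddPowerProd a n
  have h : (X * P).comp (C (a ^ 2) * X) * X * C (a ^ 2) -
        (X * P).comp (C (a ^ 2) * X) * C (a ^ (2 * n + 1)) =
      -(C (a ^ (2 * n + 3)) * (X * P)) + C (a ^ (4 * n + 4)) * (X * P * X) := by
    have := congrArg (C a ^ 2 * X * ·) (oddPowerProd_comp a n)
    simp only [mul_comp, X_comp, C_pow] at this ⊢
    linear_combination this
  have hc := congrArg (coeff · (n + 1)) h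
  simp only [coeff_sub, coeff_add, coeff_neg, coeff_mul_C, coeff_C_mul, coeff_mul_X,
    comp_C_mul_X_coeff, coeff_X_mul] at hc
  have hpow : a ^ (2 * n + 2) ≠ 0 := pow_ne_zero _ ha
  apply mul_left_cancel₀ hpow
  linear_combination hc

theorem integral_exp_mul_I_zpow (s : ℤ) :
    ∫ θ in (0 : ℝ)..2 * π, exp (θ * I) ^ s = if s = 0 then ((2 * π : ℝ) : ℂ) else 0 := by
  split_ifs with hs
  · simp [hs]
  have hsI : (s : ℂ) * I ≠ 0 := mul_ne_zero (Int.cast_ne_zero.mpr hs) I_ne_zero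
  calc ∫ θ in (0 : ℝ)..2 * π, exp (θ * I) ^ s
      = ∫ θ in (0 : ℝ)..2 * π, exp (s * I * θ) := by
        refine intervalIntegral.integral_congr fun θ _ => ?_
        simp only [← exp_int_mul]
        ring_nf
    _ = (exp (s * I * (2 * π : ℝ)) - exp (s * I * (0 : ℝ))) / (s * I) :=
        integral_exp_mul_complex hsI
    _ = 0 := by
        rw [show (s : ℂ) * I * ((2 * π : ℝ) : ℂ) = s * (2 * π * I) by push_cast; ring,
          exp_int_mul_two_pi_mul_I]
        simp

theorem integral_eval_exp_mul_I_mul_inv_pow (p : ℂ[X]) (k : ℕ) :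
    ∫ θ in (0 : ℝ)..2 * π, p.eval (exp (θ * I)) * (exp (θ * I))⁻¹ ^ k =
      ((2 * π : ℝ) : ℂ) * p.coeff k := by
  set N := max p.natDegree k + 1
  have hexpand : ∀ θ : ℝ, p.eval (exp (θ * I)) * (exp (θ * I))⁻¹ ^ k =
      ∑ i ∈ range N, p.coeff i * exp (θ * I) ^ ((i : ℤ) - k) := fun θ => by
    rw [eval_eq_sum_range' (n := N) (by omega), sum_mul]
    refine sum_congr rfl fun i _ => ?_
    rw [zpow_sub₀ (exp_ne_zero _), zpow_natCast, zpow_natCast, inv_pow, div_eq_mul_inv, mul_assoc]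
  simp_rw [hexpand]
  rw [intervalIntegral.integral_finsetSum
    (f := fun i (θ : ℝ) => p.coeff i * exp (θ * I) ^ ((i : ℤ) - k)) fun i _ =>
    (continuous_const.mul ((by fun_prop : Continuous fun θ : ℝ => exp (θ * I)).zpow₀ _
      fun θ => Or.inl (exp_ne_zero _))).intervalIntegrable _ _]
  simp_rw [intervalIntegral.integral_const_mul, integral_exp_mul_I_zpow, sub_eq_zero,
    Nat.cast_inj, mul_ite, mul_zero, sum_ite_eq', mem_range]
  rw [if_pos (by omega), mul_comm]

theorem prod_norm_sq_sub_eq_eval_oddPowerProd (ρ : ℝ) (n : ℕ) {z : ℂ} (hz : ‖z‖ = 1) :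
    ((∏ k ∈ range n, ‖z - (ρ : ℂ) ^ (2 * k + 1)‖ ^ 2 : ℝ) : ℂ) =
      (oddPowerProd (ρ : ℂ) n).eval z * z⁻¹ ^ n := by
  have hz0 : z ≠ 0 := norm_ne_zero_iff.mp (by rw [hz]; exact one_ne_zero)
  have hfactor : ∀ k : ℕ, ((‖z - (ρ : ℂ) ^ (2 * k + 1)‖ ^ 2 : ℝ) : ℂ) =
      (z - (ρ : ℂ) ^ (2 * k + 1)) * (1 - (ρ : ℂ) ^ (2 * k + 1) * z) * z⁻¹ := fun k => by
    rw [ofReal_pow, ← mul_conj', map_sub, ← RCLike.inv_eq_conj hz, map_pow, conj_ofReal]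
    field_simp
  simp only [ofReal_prod, hfactor, prod_mul_distrib, prod_const, card_range, oddPowerProd,
    eval_prod, eval_mul, eval_sub, eval_one, eval_pow, eval_C, eval_X]

theorem integral_prod_norm_sq_sub_pos (c : ℕ → ℂ) (hc : ∀ k, ‖c k‖ ≠ 1) (n : ℕ) :
    0 < ∫ θ in (0 : ℝ)..2 * π, ∏ k ∈ range n, ‖exp (θ * I) - c k‖ ^ 2 := by
  refine intervalIntegral.intervalIntegral_pos_of_pos_on
    (Continuous.intervalIntegrable (by fun_prop) _ _) (fun θ _ => prod_pos fun k _ => ?_)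
    (by positivity)
  refine pow_pos (norm_pos_iff.mpr (sub_ne_zero.mpr fun h => hc k ?_)) 2
  rw [← h, norm_exp_ofReal_mul_I]

theorem circle_moment_ratio_prod_norm_sq {ρ : ℝ} (hρ0 : ρ ≠ 0) (hρ1 : |ρ| < 1) (n : ℕ) :
    (∫ θ in (0 : ℝ)..2 * π, exp (θ * I) *
        ((∏ k ∈ range n, ‖exp (θ * I) - (ρ : ℂ) ^ (2 * k + 1)‖ ^ 2 : ℝ) : ℂ)) /
      (∫ θ in (0 : ℝ)..2 * π, ((∏ k ∈ range n, ‖exp (θ * I) - (ρ : ℂ) ^ (2 * k + 1)‖ ^ 2 : ℝ) : ℂ)) =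
      ((-ρ * (1 - ρ ^ (2 * n)) / (1 - ρ ^ (2 * n + 2)) : ℝ) : ℂ) := by
  have hpow_lt : ∀ m ≠ 0, |ρ ^ m| < 1 := fun m hm => by
    rw [abs_pow]; exact pow_lt_one₀ (abs_nonneg ρ) hρ1 hm
  have hP := fun θ : ℝ => prod_norm_sq_sub_eq_eval_oddPowerProd ρ n (norm_exp_ofReal_mul_I θ)
  have hXP : ∀ θ : ℝ,
      exp (θ * I) * ((oddPowerProd (ρ : ℂ) n).eval (exp (θ * I)) * (exp (θ * I))⁻¹ ^ n) =
        (X * oddPowerProd (ρ : ℂ) n).eval (exp (θ * I)) * (exp (θ * I))⁻¹ ^ n := fun θ => by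
    rw [eval_mul, eval_X, mul_assoc]
  have hmass : ((2 * π : ℝ) : ℂ) * (oddPowerProd (ρ : ℂ) n).coeff n ≠ 0 := by
    rw [← integral_eval_exp_mul_I_mul_inv_pow]
    simp_rw [← hP, intervalIntegral.integral_ofReal, ofReal_ne_zero]
    refine (integral_prod_norm_sq_sub_pos _ (fun k => ?_) n).ne'
    rw [norm_pow, norm_real, Real.norm_eq_abs, ← abs_pow]
    exact (hpow_lt _ (by omega)).ne
  have hρpow : (1 : ℂ) - (ρ : ℂ) ^ (2 * n + 2) ≠ 0 := by
    rw [← ofReal_pow, ← ofReal_one, ← ofReal_sub, ofReal_ne_zero, sub_ne_zero]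
    exact (lt_of_abs_lt (hpow_lt _ (by omega))).ne'
  simp_rw [hP, hXP, integral_eval_exp_mul_I_mul_inv_pow]
  push_cast at hmass ⊢
  rw [div_eq_div_iff hmass hρpow]
  linear_combination 2 * (π : ℂ) *
    coeff_X_mul_oddPowerProd (ofReal_ne_zero.mpr hρ0) n

theorem moebius_eq_odd_pow {K : Type*} [Field K] {a ω : K} {n : ℕ} (h2 : 1 - a ^ 2 ≠ 0)
    (h2n : 1 - a ^ (2 * n + 2) ≠ 0) (hω : ω = -a * (1 - a ^ (2 * n)) / (1 - a ^ (2 * n + 2))) :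
    (ω + a) / (a * ω + 1) = a ^ (2 * n + 1) := by
  have hden : a * ω + 1 = (1 - a ^ 2) / (1 - a ^ (2 * n + 2)) := by
    rw [hω]; field_simp; ring
  rw [hden, div_eq_iff (div_ne_zero h2 h2n), hω]
  field_simp
  ring

/-- Theorem 4.12: for the sequence of measures dμ_{n+1}(z) = |z − T_n|² dμ_n(z)
on the unit circle starting from Haar measure, with ω_n the normalized first
moment and T_n = (ω_n + ρ)/(ρω̄_n + 1), one has T_n = ρ^{2n+1} for all n;
in particular T_n → 0. -/
theorem stmt16 (ρ : ℝ) (h1 : 0 < ρ) (h2 : ρ < 1)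
    (w : ℕ → ℂ → ℝ) (ω T : ℕ → ℂ)
    (hw0 : ∀ z, w 0 z = 1)
    (hwsucc : ∀ n z, w (n + 1) z = ‖z - T n‖ ^ 2 * w n z)
    (hω : ∀ n, ω n =
      (∫ θ in (0:ℝ)..(2 * π),
          Complex.exp (θ * Complex.I) * (w n (Complex.exp (θ * Complex.I)) : ℂ)) /
      (∫ θ in (0:ℝ)..(2 * π), (w n (Complex.exp (θ * Complex.I)) : ℂ)))
    (hT : ∀ n, T n = (ω n + ρ) / (ρ * (starRingEnd ℂ) (ω n) + 1)) :
    (∀ n, T n = (ρ : ℂ) ^ (2 * n + 1)) ∧ Tendsto T atTop (nhds 0) := by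
  have hρ1 : |ρ| < 1 := by rwa [abs_of_pos h1]
  have hT_eq : ∀ n, T n = (ρ : ℂ) ^ (2 * n + 1) := by
    intro n
    induction n using Nat.strong_induction_on with
    | _ n ih =>
    have hw : ∀ z, w n z = ∏ k ∈ range n, ‖z - (ρ : ℂ) ^ (2 * k + 1)‖ ^ 2 := fun z => by
      rw [← prod_range_induction _ (w · z) (hw0 z) n fun k _ => by rw [hwsucc, mul_comm]]
      exact prod_congr rfl fun k hk => by rw [ih k (mem_range.mp hk)]
    rw [hT, hω]
    simp_rw [hw]
    rw [circle_moment_ratio_prod_norm_sq h1.ne' hρ1, conj_ofReal]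
    have hpow_ne : ∀ m ≠ 0, 1 - ρ ^ m ≠ 0 := fun m hm =>
      sub_ne_zero.mpr (pow_lt_one₀ h1.le h2 hm).ne'
    exact_mod_cast moebius_eq_odd_pow (hpow_ne 2 two_ne_zero) (hpow_ne _ (by omega)) rfl
  refine ⟨hT_eq, ?_⟩
  have hgeom : Tendsto (fun n : ℕ => (ρ : ℂ) * ((ρ : ℂ) ^ 2) ^ n) atTop (nhds 0) := by
    simpa using (tendsto_pow_atTop_nhds_zero_of_norm_lt_one (x := (ρ : ℂ) ^ 2)
      (by rw [norm_pow, norm_real, Real.norm_eq_abs, sq_abs]; nlinarith)).const_mul (ρ : ℂ)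
  convert hgeom using 2 with n
  rw [hT_eq, pow_succ', pow_mul]
end
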